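/- arXiv:1707.05918 — 11 statements merged into one kernel-verified Lean document; each statement's English description precedes it below -/
import Mathlib

section
/- In the real quaternions, the product α̲·β̲ equals Q_L(0) − [q] − qΔω, i.e. α̲β̲ = (L(0) + L(1)i + L(2)j + L(3)k) − (1 − q + q² − q³) − qΔ(qi + pj − k). -/
/-!
By Vieta, `α + β = p` and `αβ = -q`, so the Binet formula `L n = αⁿ + βⁿ` holds for `n ≥ 0`
and `Q_L(0)` has the components `αⁿ + βⁿ`, `n = 0, …, 3`. Multiplying out `α̲β̲`, each component
splits into a symmetric part (`αⁿ + βⁿ`, or `1 + αβ + (αβ)² + (αβ)³ = [q]` for the real part)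
and an antisymmetric part, a multiple of `αβ(α - β) = -qΔ`.
-/

open Quaternion

theorem lucas_eq_pow_add_pow {R : Type*} [CommRing R] {p q α β : R} {L : ℤ → R}
    (hsum : α + β = p) (hprod : α * β = -q) (hL0 : L 0 = 2) (hL1 : L 1 = p)
    (hL : ∀ n : ℤ, L (n + 2) = p * L (n + 1) + q * L n) : ∀ n : ℕ, L n = α ^ n + β ^ n
  | 0 => by rw [Nat.cast_zero, hL0]; norm_num
  | 1 => by rw [Nat.cast_one, hL1, ← hsum]; ring
  | n + 2 => by
    have hrec := hL n
    push_cast at hrec ⊢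
    rw [hrec, lucas_eq_pow_add_pow hsum hprod hL0 hL1 hL n,
      ← Nat.cast_one, ← Nat.cast_add, lucas_eq_pow_add_pow hsum hprod hL0 hL1 hL (n + 1)]
    linear_combination (α ^ (n + 1) + β ^ (n + 1)) * hsum.symm + (α ^ n + β ^ n) * hprod

namespace Quaternion

variable {R : Type*} [CommRing R] {i j k : ℍ[R]}

-- `⟨0, 1, 0, 0⟩` elaborates at type `ℍ[R,-1,0,-1]`, not `ℍ[R]`, which blocks the `Quaternion`
-- simp lemmas; so we work with the components of `i`, `j`, `k` instead.
theorem basis_components (hi : i = ⟨0, 1, 0, 0⟩) (hj : j = ⟨0, 0, 1, 0⟩)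
    (hk : k = ⟨0, 0, 0, 1⟩) :
    (i.re = 0 ∧ i.imI = 1 ∧ i.imJ = 0 ∧ i.imK = 0)
      ∧ (j.re = 0 ∧ j.imI = 0 ∧ j.imJ = 1 ∧ j.imK = 0)
      ∧ (k.re = 0 ∧ k.imI = 0 ∧ k.imJ = 0 ∧ k.imK = 1) := by
  subst hi hj hk
  exact ⟨⟨rfl, rfl, rfl, rfl⟩, ⟨rfl, rfl, rfl, rfl⟩, ⟨rfl, rfl, rfl, rfl⟩⟩

theorem pow_basis_mul_pow_basis (hi : i = ⟨0, 1, 0, 0⟩) (hj : j = ⟨0, 0, 1, 0⟩)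
    (hk : k = ⟨0, 0, 0, 1⟩) {x y p q Δ : R} (hp : p = x + y) (hq : q = -(x * y))
    (hΔ : Δ = x - y) :
    (1 + (x : ℍ[R]) * i + ((x ^ 2 : R) : ℍ[R]) * j + ((x ^ 3 : R) : ℍ[R]) * k)
        * (1 + (y : ℍ[R]) * i + ((y ^ 2 : R) : ℍ[R]) * j + ((y ^ 3 : R) : ℍ[R]) * k)
      = ((2 : R) : ℍ[R]) + (p : ℍ[R]) * i + ((x ^ 2 + y ^ 2 : R) : ℍ[R]) * j
          + ((x ^ 3 + y ^ 3 : R) : ℍ[R]) * k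
        - ((1 - q + q ^ 2 - q ^ 3 : R) : ℍ[R])
        - ((q * Δ : R) : ℍ[R]) * ((q : ℍ[R]) * i + (p : ℍ[R]) * j - k) := by
  obtain ⟨⟨hi0, hi1, hi2, hi3⟩, ⟨hj0, hj1, hj2, hj3⟩, ⟨hk0, hk1, hk2, hk3⟩⟩ :=
    basis_components hi hj hk
  subst hp hq hΔ
  ext <;> simp only [re_add, imI_add, imJ_add, imK_add, re_sub, imI_sub, imJ_sub, imK_sub,
    re_mul, imI_mul, imJ_mul, imK_mul, re_one, imI_one, imJ_one, imK_one, re_coe, imI_coe, imJ_coe,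
    imK_coe, hi0, hi1, hi2, hi3, hj0, hj1, hj2, hj3, hk0, hk1, hk2, hk3] <;> ring

end Quaternion

theorem stmt_0 (p q : ℝ) (hpq : 0 < p^2 + 4*q)
    (α β : ℝ)
    (hα : α = (p + Real.sqrt (p^2 + 4*q)) / 2)
    (hβ : β = (p - Real.sqrt (p^2 + 4*q)) / 2)
    (Δ : ℝ) (hΔ : Δ = α - β)
    (L : ℤ → ℝ) (hL0 : L 0 = 2) (hL1 : L 1 = p)
    (hL : ∀ n : ℤ, L (n+2) = p * L (n+1) + q * L n)
    (i j k : ℍ[ℝ])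
    (hi : i = ⟨0,1,0,0⟩) (hj : j = ⟨0,0,1,0⟩) (hk : k = ⟨0,0,0,1⟩)
    (QL : ℤ → ℍ[ℝ])
    (hQL : ∀ n : ℤ, QL n = ((L n : ℝ) : ℍ[ℝ]) + ((L (n+1) : ℝ) : ℍ[ℝ]) * i
      + ((L (n+2) : ℝ) : ℍ[ℝ]) * j + ((L (n+3) : ℝ) : ℍ[ℝ]) * k)
    (ω : ℍ[ℝ]) (hω : ω = ((q : ℝ) : ℍ[ℝ]) * i + ((p : ℝ) : ℍ[ℝ]) * j - k)
    (uα : ℍ[ℝ])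
    (huα : uα = 1 + ((α : ℝ) : ℍ[ℝ]) * i + ((α^2 : ℝ) : ℍ[ℝ]) * j + ((α^3 : ℝ) : ℍ[ℝ]) * k)
    (uβ : ℍ[ℝ])
    (huβ : uβ = 1 + ((β : ℝ) : ℍ[ℝ]) * i + ((β^2 : ℝ) : ℍ[ℝ]) * j + ((β^3 : ℝ) : ℍ[ℝ]) * k) :
    uα * uβ = QL 0 - ((1 - q + q^2 - q^3 : ℝ) : ℍ[ℝ]) - ((q * Δ : ℝ) : ℍ[ℝ]) * ω := by
  have hsqrt : Real.sqrt (p ^ 2 + 4 * q) ^ 2 = p ^ 2 + 4 * q := Real.sq_sqrt hpq.le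
  have hsum : α + β = p := by rw [hα, hβ]; ring
  have hprod : α * β = -q := by rw [hα, hβ]; linear_combination (-1 / 4 : ℝ) * hsqrt
  have binet := lucas_eq_pow_add_pow hsum hprod hL0 hL1 hL
  have hL2 : L 2 = α ^ 2 + β ^ 2 := by simpa using binet 2
  have hL3 : L 3 = α ^ 3 + β ^ 3 := by simpa using binet 3
  rw [huα, huβ, hω, hQL 0, zero_add, zero_add, zero_add, hL0, hL1, hL2, hL3]
  exact pow_basis_mul_pow_basis hi hj hk hsum.symm (by rw [hprod, neg_neg]) hΔ
end

section
/- (Catalan's identity for generalized Fibonacci quaternions) For all integers m and n (with q ≠ 0): Q_w(m)² − Q_w(m+n)·Q_w(m−n) = AB·(−q)^(m−n)·((Q_L(0) − [q])·F(n)² − q·ω·F(n)·L(n)); equivalently, writing F(−n) = −(−q)^(−n)F(n), this is −AB(−q)^m F(−n)((Q_L(0) − [q])F(n) − qωL(n)). -/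
/-!
Binet's formula gives W(n) = (A αⁿ - B βⁿ)/Δ, hence Q_w(n) = (A αⁿ α̂ - B βⁿ β̂)/Δ with
α̂ = 1 + α i + α² j + α³ k (`hat α`). In the Catalan expression the α̂² and β̂² terms cancel
and only the cross products α̂β̂ and β̂α̂ survive. Their common part is α̂ + β̂ - [q] = Q_L(0) - [q]
and their difference is -2qΔω; collecting the coefficients (αⁿ - βⁿ)² and αⁿ - βⁿ times αⁿ + βⁿ
gives the factors F(n)² and F(n)L(n).
-/

open Quaternion

section Recurrence

variable {K : Type*} [Field K] {p q : K}

theorem eq_of_linearRecurrence (hq : q ≠ 0) {G H : ℤ → K}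
    (hG : ∀ n, G (n + 2) = p * G (n + 1) + q * G n)
    (hH : ∀ n, H (n + 2) = p * H (n + 1) + q * H n)
    (h0 : G 0 = H 0) (h1 : G 1 = H 1) : G = H := by
  suffices h : ∀ n : ℤ, G n = H n ∧ G (n + 1) = H (n + 1) from funext fun n => (h n).1
  intro n
  induction n using Int.induction_on with
  | zero => exact ⟨h0, h1⟩
  | succ k ih =>
    refine ⟨ih.2, ?_⟩
    rw [add_assoc, one_add_one_eq_two, hG, hH, ih.1, ih.2]
  | pred k ih =>
    have hG' := hG (-k - 1)
    have hH' := hH (-k - 1)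
    rw [show -(k : ℤ) - 1 + 2 = -k + 1 by ring, show -(k : ℤ) - 1 + 1 = -k by ring] at hG' hH'
    refine ⟨mul_left_cancel₀ hq ?_, by rw [sub_add_cancel]; exact ih.1⟩
    linear_combination hH' - hG' + ih.2 - p * ih.1

theorem zpow_add_two_eq_of_sq_eq {x : K} (hx : x ≠ 0) (hx2 : x ^ 2 = p * x + q) (n : ℤ) :
    x ^ (n + 2) = p * x ^ (n + 1) + q * x ^ n := by
  rw [zpow_add₀ hx, zpow_add_one₀ hx, zpow_two]
  linear_combination x ^ n * hx2

theorem binet {α β : K} (hsum : α + β = p) (hprod : α * β = -q) (hne : α ≠ β) (hq : q ≠ 0)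
    {W : ℤ → K} (hW : ∀ n, W (n + 2) = p * W (n + 1) + q * W n) (n : ℤ) :
    W n = (W 1 - W 0 * β) / (α - β) * α ^ n - (W 1 - W 0 * α) / (α - β) * β ^ n := by
  have hαβ : α * β ≠ 0 := hprod ▸ neg_ne_zero.mpr hq
  have hα := left_ne_zero_of_mul hαβ
  have hβ := right_ne_zero_of_mul hαβ
  have hΔ : α - β ≠ 0 := sub_ne_zero.mpr hne
  have hα2 := zpow_add_two_eq_of_sq_eq (p := p) (q := q) hα
    (by linear_combination α * hsum - hprod)
  have hβ2 := zpow_add_two_eq_of_sq_eq (p := p) (q := q) hβ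
    (by linear_combination β * hsum - hprod)
  refine congrFun (eq_of_linearRecurrence hq hW (H := fun n =>
    (W 1 - W 0 * β) / (α - β) * α ^ n - (W 1 - W 0 * α) / (α - β) * β ^ n) ?_ ?_ ?_) n
  · intro t; rw [hα2, hβ2]; ring
  · field_simp; ring
  · field_simp; ring

end Recurrence

section Catalan

variable {K A : Type*} [Field K] [Ring A] [Algebra K A]

theorem catalan_of_binet {α β c d : K} (hα : α ≠ 0) (hβ : β ≠ 0) (a b : A) {Q : ℤ → A}
    (hQ : ∀ n, Q n = (c * α ^ n) • a - (d * β ^ n) • b) (m n : ℤ) :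
    Q m ^ 2 - Q (m + n) * Q (m - n) =
      (c * d * (α * β) ^ (m - n) * (α ^ n - β ^ n)) • (α ^ n • (a * b) - β ^ n • (b * a)) := by
  have hαn : α ^ n ≠ 0 := zpow_ne_zero n hα
  have hβn : β ^ n ≠ 0 := zpow_ne_zero n hβ
  simp only [hQ, sq, sub_mul, mul_sub, smul_mul_smul_comm, smul_sub, smul_smul, mul_zpow,
    zpow_add₀ hα, zpow_add₀ hβ, zpow_sub₀ hα, zpow_sub₀ hβ]
  match_scalars <;> field_simp <;> ring

end Catalan

def hat (x : ℝ) : ℍ[ℝ] := ⟨1, x, x ^ 2, x ^ 3⟩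

section hat

variable (x : ℝ)

@[simp] theorem re_hat : (hat x).re = 1 := rfl
@[simp] theorem imI_hat : (hat x).imI = x := rfl
@[simp] theorem imJ_hat : (hat x).imJ = x ^ 2 := rfl
@[simp] theorem imK_hat : (hat x).imK = x ^ 3 := rfl

end hat

theorem hat_mul_hat {i j k : ℍ[ℝ]}
    (hi : i = ⟨0, 1, 0, 0⟩) (hj : j = ⟨0, 0, 1, 0⟩) (hk : k = ⟨0, 0, 0, 1⟩)
    {p q x y : ℝ} (hsum : x + y = p) (hprod : x * y = -q) :
    hat x * hat y = hat x + hat y - ((1 - q + q ^ 2 - q ^ 3 : ℝ) : ℍ[ℝ])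
      - (q * (x - y)) • ((q : ℍ[ℝ]) * i + (p : ℍ[ℝ]) * j - k) := by
  subst hsum
  obtain rfl : q = -(x * y) := by linarith
  -- `hi`, `hj`, `hk` are used only after expanding: on the literals `⟨_, _, _, _⟩`, which are
  -- typed as `QuaternionAlgebra`, the `Quaternion` multiplication lemmas do not fire.
  ext <;> simp only [re_add, imI_add, imJ_add, imK_add, re_sub, imI_sub, imJ_sub, imK_sub,
    re_mul, imI_mul, imJ_mul, imK_mul, re_smul, imI_smul, imJ_smul, imK_smul, smul_eq_mul,
    re_coe, imI_coe, imJ_coe, imK_coe, re_hat, imI_hat, imJ_hat, imK_hat] <;>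
    simp only [hi, hj, hk] <;> ring

theorem quaternion_binet {i j k : ℍ[ℝ]}
    (hi : i = ⟨0, 1, 0, 0⟩) (hj : j = ⟨0, 0, 1, 0⟩) (hk : k = ⟨0, 0, 0, 1⟩)
    {α β c d : ℝ} (hα : α ≠ 0) (hβ : β ≠ 0) {W : ℤ → ℝ}
    (hW : ∀ n, W n = c * α ^ n - d * β ^ n) (n : ℤ) :
    (W n : ℍ[ℝ]) + (W (n + 1) : ℍ[ℝ]) * i + (W (n + 2) : ℍ[ℝ]) * j + (W (n + 3) : ℍ[ℝ]) * k
      = (c * α ^ n) • hat α - (d * β ^ n) • hat β := by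
  ext <;> simp only [re_add, imI_add, imJ_add, imK_add, re_sub, imI_sub, imJ_sub, imK_sub,
    re_mul, imI_mul, imJ_mul, imK_mul, re_smul, imI_smul, imJ_smul, imK_smul, smul_eq_mul,
    re_coe, imI_coe, imJ_coe, imK_coe, re_hat, imI_hat, imJ_hat, imK_hat,
    hW, zpow_add₀ hα, zpow_add₀ hβ, zpow_ofNat] <;> simp only [hi, hj, hk] <;> ring

theorem stmt_3 (p q : ℝ) (hpq : 0 < p^2 + 4*q)
    (hq : q ≠ 0)
    (α β : ℝ)
    (hα : α = (p + Real.sqrt (p^2 + 4*q)) / 2)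
    (hβ : β = (p - Real.sqrt (p^2 + 4*q)) / 2)
    (F : ℤ → ℝ) (hF0 : F 0 = 0) (hF1 : F 1 = 1)
    (hF : ∀ n : ℤ, F (n+2) = p * F (n+1) + q * F n)
    (L : ℤ → ℝ) (hL0 : L 0 = 2) (hL1 : L 1 = p)
    (hL : ∀ n : ℤ, L (n+2) = p * L (n+1) + q * L n)
    (a b : ℝ) (W : ℤ → ℝ) (hW0 : W 0 = a) (hW1 : W 1 = b)
    (hW : ∀ n : ℤ, W (n+2) = p * W (n+1) + q * W n)
    (A B : ℝ) (hA : A = b - a * β) (hB : B = b - a * α)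
    (i j k : ℍ[ℝ])
    (hi : i = ⟨0,1,0,0⟩) (hj : j = ⟨0,0,1,0⟩) (hk : k = ⟨0,0,0,1⟩)
    (Qw : ℤ → ℍ[ℝ])
    (hQw : ∀ n : ℤ, Qw n = ((W n : ℝ) : ℍ[ℝ]) + ((W (n+1) : ℝ) : ℍ[ℝ]) * i
      + ((W (n+2) : ℝ) : ℍ[ℝ]) * j + ((W (n+3) : ℝ) : ℍ[ℝ]) * k)
    (QL : ℤ → ℍ[ℝ])
    (hQL : ∀ n : ℤ, QL n = ((L n : ℝ) : ℍ[ℝ]) + ((L (n+1) : ℝ) : ℍ[ℝ]) * i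
      + ((L (n+2) : ℝ) : ℍ[ℝ]) * j + ((L (n+3) : ℝ) : ℍ[ℝ]) * k)
    (ω : ℍ[ℝ]) (hω : ω = ((q : ℝ) : ℍ[ℝ]) * i + ((p : ℝ) : ℍ[ℝ]) * j - k)
    (m n : ℤ) :
    Qw m ^ 2 - Qw (m+n) * Qw (m-n) =
      ((A * B * (-q)^(m-n) : ℝ) : ℍ[ℝ]) *
        ((QL 0 - ((1 - q + q^2 - q^3 : ℝ) : ℍ[ℝ])) * ((F n ^ 2 : ℝ) : ℍ[ℝ])
          - ((q : ℝ) : ℍ[ℝ]) * ω * ((F n * L n : ℝ) : ℍ[ℝ])) := by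
  have hsqrt : Real.sqrt (p ^ 2 + 4 * q) ^ 2 = p ^ 2 + 4 * q := Real.sq_sqrt hpq.le
  have hsum : α + β = p := by rw [hα, hβ]; ring
  have hprod : α * β = -q := by rw [hα, hβ]; linear_combination -hsqrt / 4
  have hne : α ≠ β := by rw [hα, hβ]; have := Real.sqrt_pos.mpr hpq; intro h; linarith
  have hαβ : α * β ≠ 0 := hprod ▸ neg_ne_zero.mpr hq
  have hα0 := left_ne_zero_of_mul hαβ
  have hβ0 := right_ne_zero_of_mul hαβ
  have hWn := binet hsum hprod hne hq hW
  have hFn : ∀ t, F t = (α ^ t - β ^ t) / (α - β) := fun t => by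
    rw [binet hsum hprod hne hq hF t, hF0, hF1]; ring
  have hLn : ∀ t, L t = α ^ t + β ^ t := fun t => by
    rw [binet hsum hprod hne hq hL t, hL0, hL1, ← hsum]
    field_simp [sub_ne_zero.mpr hne]
    ring
  have hQw_hat := fun t => (hQw t).trans (quaternion_binet hi hj hk hα0 hβ0 hWn t)
  have hQL_hat := quaternion_binet hi hj hk hα0 hβ0 (W := L) (c := 1) (d := -1)
    (fun t => by rw [hLn]; ring)
  rw [catalan_of_binet hα0 hβ0 (hat α) (hat β) hQw_hat, hat_mul_hat hi hj hk hsum hprod,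
    hat_mul_hat hi hj hk ((add_comm β α).trans hsum) ((mul_comm β α).trans hprod), ← hω,
    hQL, hQL_hat, hFn, hLn, hA, hB, hW0, hW1]
  simp only [Quaternion.coe_mul_eq_smul, Quaternion.mul_coe_eq_smul, smul_sub, smul_add]
  subst hsum
  obtain rfl : q = -(α * β) := by linarith
  match_scalars <;> field_simp <;> ring
end

section
/- (Cassini's identity for generalized Fibonacci quaternions) For every integer m (with q ≠ 0): Q_w(m)² − Q_w(m+1)·Q_w(m−1) = AB·(−q)^(m−1)·(Q_L(0) − [q] − pq·ω). -/
/-!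
If a sequence `x : ℤ → A` in an algebra satisfies `x (n + 2) = c • x (n + 1) + d • x n` with
scalar coefficients, its Cassini defect `x n ^ 2 - x (n + 1) * x (n - 1)` is multiplied by `-d` at
each step: the scalars commute with everything, so noncommutativity does no harm. The quaternions
`Q_w n` satisfy the scalar recurrence of `W` componentwise, so for `q ≠ 0` the identity reduces to
the case `m = 1`. That case is a direct computation of quaternion products, where
`A B = b² - a W 2` because `α + β = p` and `α β = -q`.
-/

open Quaternion

section Cassini

variable {A : Type*} [Ring A]

def cassini (x : ℤ → A) (n : ℤ) : A := x n ^ 2 - x (n + 1) * x (n - 1)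

theorem cassini_succ {R : Type*} [CommRing R] [Algebra R A] {x : ℤ → A} {c d : R}
    (hx : ∀ n, x (n + 2) = c • x (n + 1) + d • x n)
    (n : ℤ) : cassini x (n + 1) = (-d) • cassini x n := by
  have hprev : x (n + 1) - c • x n = d • x (n - 1) := by
    have := hx (n - 1)
    rw [show n - 1 + 2 = n + 1 by ring, sub_add_cancel] at this
    rw [this, add_sub_cancel_left]
  calc cassini x (n + 1)
      = x (n + 1) * (x (n + 1) - c • x n) - d • x n ^ 2 := by
        rw [cassini, show n + 1 + 1 = n + 2 by ring, add_sub_cancel_right, hx n]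
        simp only [sq, add_mul, mul_sub, smul_mul_assoc, mul_smul_comm]
        abel
    _ = (-d) • cassini x n := by
        rw [hprev, cassini, mul_smul_comm]
        simp only [neg_smul, smul_sub]
        abel

theorem cassini_eq_zpow_smul {K : Type*} [Field K] [Algebra K A] {x : ℤ → A} {c d : K}
    (hx : ∀ n, x (n + 2) = c • x (n + 1) + d • x n) (hd : d ≠ 0) (n : ℤ) :
    cassini x n = (-d) ^ (n - 1) • cassini x 1 := by
  have hd' : -d ≠ 0 := neg_ne_zero.2 hd
  refine Int.inductionOn' n 1 (by simp) (fun k _ ih => ?_) (fun k _ ih => ?_)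
  · rw [cassini_succ hx, ih, smul_smul, add_sub_cancel_right, ← zpow_one_add₀ hd', add_sub_cancel]
  · have h := cassini_succ hx (k - 1)
    rw [sub_add_cancel, ih] at h
    rw [← inv_smul_smul₀ hd' (cassini x (k - 1)), ← h, smul_smul, ← zpow_neg_one, ← zpow_add₀ hd',
      show -1 + (k - 1) = k - 1 - 1 by ring]

end Cassini

theorem smul_shift_sum_recurrence {R M ι : Type*} [Semiring R] [AddCommMonoid M] [Module R M]
    {x : ℤ → R} {c d : R} (hx : ∀ n, x (n + 2) = c * x (n + 1) + d * x n)
    (s : Finset ι) (e : ι → ℤ) (v : ι → M) (n : ℤ) :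
    ∑ t ∈ s, x (n + 2 + e t) • v t =
      c • ∑ t ∈ s, x (n + 1 + e t) • v t + d • ∑ t ∈ s, x (n + e t) • v t := by
  simp only [Finset.smul_sum, smul_smul, ← Finset.sum_add_distrib, ← add_smul]
  refine Finset.sum_congr rfl fun t _ => ?_
  rw [show n + 2 + e t = n + e t + 2 by ring, show n + 1 + e t = n + e t + 1 by ring, hx]

/-- A bare `⟨r, s, t, u⟩` is a term of `QuaternionAlgebra ℝ (-1) 0 (-1)`, on which the `ℍ[ℝ]`
instances are not found; `quat` fixes the type. -/
@[simps]
def quat (r s t u : ℝ) : ℍ[ℝ] := ⟨r, s, t, u⟩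

theorem coe_add_coe_mul_quat_basis (r s t u : ℝ) :
    (r : ℍ[ℝ]) + (s : ℍ[ℝ]) * quat 0 1 0 0 + (t : ℍ[ℝ]) * quat 0 0 1 0 + (u : ℍ[ℝ]) * quat 0 0 0 1 =
      quat r s t u := by
  ext <;> simp

theorem sub_mul_root_mul_sub_mul_root {p q α β : ℝ} (hpq : 0 ≤ p ^ 2 + 4 * q)
    (hα : α = (p + Real.sqrt (p ^ 2 + 4 * q)) / 2) (hβ : β = (p - Real.sqrt (p ^ 2 + 4 * q)) / 2)
    (a b : ℝ) : (b - a * β) * (b - a * α) = b ^ 2 - a * (p * b + q * a) := by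
  rw [hα, hβ]
  linear_combination (-a ^ 2 / 4) * Real.sq_sqrt hpq

theorem quat_cassini_one {p q w₀ w₁ w₂ w₃ w₄ w₅ : ℝ} (h₂ : w₂ = p * w₁ + q * w₀)
    (h₃ : w₃ = p * w₂ + q * w₁) (h₄ : w₄ = p * w₃ + q * w₂) (h₅ : w₅ = p * w₄ + q * w₃) :
    quat w₁ w₂ w₃ w₄ ^ 2 - quat w₂ w₃ w₄ w₅ * quat w₀ w₁ w₂ w₃ =
      ((w₁ ^ 2 - w₀ * w₂ : ℝ) : ℍ[ℝ]) * (quat 2 p (p ^ 2 + 2 * q) (p ^ 3 + 3 * p * q) -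
        ((1 - q + q ^ 2 - q ^ 3 : ℝ) : ℍ[ℝ]) - ((p * q : ℝ) : ℍ[ℝ]) * quat 0 q p (-1)) := by
  subst h₅ h₄ h₃ h₂
  ext <;> simp [pow_succ] <;> ring

theorem stmt_4 (p q : ℝ) (hpq : 0 < p^2 + 4*q)
    (hq : q ≠ 0)
    (α β : ℝ)
    (hα : α = (p + Real.sqrt (p^2 + 4*q)) / 2)
    (hβ : β = (p - Real.sqrt (p^2 + 4*q)) / 2)
    (L : ℤ → ℝ) (hL0 : L 0 = 2) (hL1 : L 1 = p)
    (hL : ∀ n : ℤ, L (n+2) = p * L (n+1) + q * L n)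
    (a b : ℝ) (W : ℤ → ℝ) (hW0 : W 0 = a) (hW1 : W 1 = b)
    (hW : ∀ n : ℤ, W (n+2) = p * W (n+1) + q * W n)
    (A B : ℝ) (hA : A = b - a * β) (hB : B = b - a * α)
    (i j k : ℍ[ℝ])
    (hi : i = ⟨0,1,0,0⟩) (hj : j = ⟨0,0,1,0⟩) (hk : k = ⟨0,0,0,1⟩)
    (Qw : ℤ → ℍ[ℝ])
    (hQw : ∀ n : ℤ, Qw n = ((W n : ℝ) : ℍ[ℝ]) + ((W (n+1) : ℝ) : ℍ[ℝ]) * i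
      + ((W (n+2) : ℝ) : ℍ[ℝ]) * j + ((W (n+3) : ℝ) : ℍ[ℝ]) * k)
    (QL : ℤ → ℍ[ℝ])
    (hQL : ∀ n : ℤ, QL n = ((L n : ℝ) : ℍ[ℝ]) + ((L (n+1) : ℝ) : ℍ[ℝ]) * i
      + ((L (n+2) : ℝ) : ℍ[ℝ]) * j + ((L (n+3) : ℝ) : ℍ[ℝ]) * k)
    (ω : ℍ[ℝ]) (hω : ω = ((q : ℝ) : ℍ[ℝ]) * i + ((p : ℝ) : ℍ[ℝ]) * j - k)
    (m : ℤ) :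
    Qw m ^ 2 - Qw (m+1) * Qw (m-1) =
      ((A * B * (-q)^(m-1) : ℝ) : ℍ[ℝ]) * (QL 0 - ((1 - q + q^2 - q^3 : ℝ) : ℍ[ℝ]) - ((p * q : ℝ) : ℍ[ℝ]) * ω) := by
  have hrec : ∀ n, Qw (n + 2) = p • Qw (n + 1) + q • Qw n := by
    have hQw_sum : ∀ n, Qw n = ∑ t : Fin 4, W (n + ![0, 1, 2, 3] t) • ![1, i, j, k] t := fun n => by
      simp [hQw, Fin.sum_univ_four, ← coe_mul_eq_smul]
    simpa only [hQw_sum] using smul_shift_sum_recurrence hW _ _ _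
  replace hi : i = quat 0 1 0 0 := hi
  replace hj : j = quat 0 0 1 0 := hj
  replace hk : k = quat 0 0 0 1 := hk
  have hQw_quat : ∀ n, Qw n = quat (W n) (W (n + 1)) (W (n + 2)) (W (n + 3)) := fun n => by
    rw [hQw, hi, hj, hk, coe_add_coe_mul_quat_basis]
  have hQL0 : QL 0 = quat 2 p (p ^ 2 + 2 * q) (p ^ 3 + 3 * p * q) := by
    have hL2 : L 2 = p * L 1 + q * L 0 := hL 0
    have hL3 : L 3 = p * L 2 + q * L 1 := hL 1
    rw [hQL, hi, hj, hk, coe_add_coe_mul_quat_basis]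
    simp only [Int.reduceAdd, hL3, hL2, hL1, hL0]
    congr 1 <;> ring
  have hω_quat : ω = quat 0 q p (-1) := by rw [hω, hi, hj, hk]; ext <;> simp
  have hbase : cassini Qw 1 = ((A * B : ℝ) : ℍ[ℝ]) *
      (QL 0 - ((1 - q + q ^ 2 - q ^ 3 : ℝ) : ℍ[ℝ]) - ((p * q : ℝ) : ℍ[ℝ]) * ω) := by
    have hW2 : W 2 = p * W 1 + q * W 0 := hW 0
    rw [hQL0, hω_quat, hA, hB, sub_mul_root_mul_sub_mul_root hpq.le hα hβ, ← hW0, ← hW1, ← hW2,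
      cassini, hQw_quat, hQw_quat, hQw_quat]
    simp only [Int.reduceAdd, Int.reduceSub]
    exact quat_cassini_one hW2 (hW 1) (hW 2) (hW 3)
  calc Qw m ^ 2 - Qw (m + 1) * Qw (m - 1) = cassini Qw m := rfl
    _ = (-q) ^ (m - 1) • cassini Qw 1 := cassini_eq_zpow_smul hrec hq m
    _ = _ := by
      rw [hbase, ← coe_mul_eq_smul, ← mul_assoc, ← coe_mul, mul_comm ((-q) ^ (m - 1))]
end

section
/- (d'Ocagne's identity for generalized Fibonacci quaternions) For all integers n and m (with q ≠ 0): Q_w(n)·Q_w(m+1) − Q_w(n+1)·Q_w(m) = (−q)^m·AB·((Q_L(0) − [q])·F(n−m) − q·ω·L(n−m)). -/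
/-!
Write `x̂ = 1 + x i + x² j + x³ k` (`powQuat x`). By Binet's formula
`Q_w(n) = (A αⁿ α̂ − B βⁿ β̂) / (α − β)`, and in `Q_w(n) Q_w(m+1) − Q_w(n+1) Q_w(m)` the terms in
`α̂²` and `β̂²` cancel, leaving `AB (αβ)ᵐ (α^(n−m) α̂β̂ − β^(n−m) β̂α̂) / (α − β)`. A direct computation
gives `α̂β̂ = Q_L(0) − [q] − q(α − β)ω` and `β̂α̂ = Q_L(0) − [q] + q(α − β)ω`, and Binet's formulas
for `F` and `L` turn this into the right-hand side.
-/

open Quaternion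

section LinearRecurrence

variable {K : Type*} [Field K]

def SatisfiesRec (p q : K) (f : ℤ → K) : Prop :=
  ∀ n : ℤ, f (n + 2) = p * f (n + 1) + q * f n

theorem SatisfiesRec.eq_of_eq_zero_one {p q : K} (hq : q ≠ 0) {f g : ℤ → K}
    (hf : SatisfiesRec p q f) (hg : SatisfiesRec p q g) (h0 : f 0 = g 0) (h1 : f 1 = g 1) :
    ∀ n, f n = g n := by
  suffices key : ∀ n : ℤ, f n = g n ∧ f (n + 1) = g (n + 1) from fun n => (key n).1
  intro n
  induction n using Int.induction_on with
  | zero => exact ⟨h0, h1⟩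
  | succ k ih =>
    refine ⟨ih.2, ?_⟩
    rw [add_assoc, one_add_one_eq_two, hf, hg, ih.1, ih.2]
  | pred k ih =>
    -- going down, `q ≠ 0` lets the recurrence be solved for its lowest term
    have hk : -(k : ℤ) - 1 + 1 = -k := by ring
    have hk2 : -(k : ℤ) - 1 + 2 = -k + 1 := by ring
    refine ⟨?_, by rw [hk]; exact ih.1⟩
    have hfk := hf (-k - 1)
    have hgk := hg (-k - 1)
    rw [hk, hk2, ih.1, ih.2] at hfk
    rw [hk, hk2] at hgk
    exact mul_left_cancel₀ hq (by linear_combination hgk - hfk)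

theorem satisfiesRec_zpow {p q α : K} (hq : q ≠ 0) (hα : α ^ 2 = p * α + q) :
    SatisfiesRec p q (α ^ ·) := by
  have hα0 : α ≠ 0 := by rintro rfl; exact hq (by simpa using hα.symm)
  intro n
  simp only [zpow_add₀ hα0, zpow_one, zpow_two, ← sq, hα]
  ring

theorem SatisfiesRec.eq_binet {p q α β : K} (hq : q ≠ 0) (hsum : α + β = p) (hprod : α * β = -q)
    {f : ℤ → K} (hf : SatisfiesRec p q f) {c d : K} (h0 : f 0 = c + d)
    (h1 : f 1 = c * α + d * β) (n : ℤ) : f n = c * α ^ n + d * β ^ n := by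
  have hα := satisfiesRec_zpow hq (α := α) (p := p) (by linear_combination α * hsum - hprod)
  have hβ := satisfiesRec_zpow hq (α := β) (p := p) (by linear_combination β * hsum - hprod)
  refine hf.eq_of_eq_zero_one (g := fun n => c * α ^ n + d * β ^ n) hq (fun n => ?_)
    (by simpa using h0) (by simpa using h1) n
  simp only [hα n, hβ n]
  ring

end LinearRecurrence

section Quaternion

variable {R : Type*} [CommRing R]

def quatOfSeq (f : ℤ → R) (n : ℤ) : ℍ[R] := ⟨f n, f (n + 1), f (n + 2), f (n + 3)⟩

def powQuat (x : R) : ℍ[R] := ⟨1, x, x ^ 2, x ^ 3⟩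

def omegaQuat (p q : R) : ℍ[R] := ⟨0, q, p, -1⟩

theorem coe_add_coe_mul_basis_eq_mk {i j k : ℍ[R]} (hi : i = ⟨0, 1, 0, 0⟩)
    (hj : j = ⟨0, 0, 1, 0⟩) (hk : k = ⟨0, 0, 0, 1⟩) (a b c d : R) :
    (a : ℍ[R]) + (b : ℍ[R]) * i + (c : ℍ[R]) * j + (d : ℍ[R]) * k = ⟨a, b, c, d⟩ := by
  ext <;> simp only [Quaternion.re_add, Quaternion.imI_add, Quaternion.imJ_add, Quaternion.imK_add,
    Quaternion.re_mul, Quaternion.imI_mul, Quaternion.imJ_mul, Quaternion.imK_mul,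
    Quaternion.re_coe, Quaternion.imI_coe, Quaternion.imJ_coe, Quaternion.imK_coe] <;>
    subst hi hj hk <;> simp

theorem powQuat_mul_powQuat {p q x y : R} (hsum : x + y = p) (hprod : x * y = -q) :
    powQuat x * powQuat y = powQuat x + powQuat y - ((1 - q + q ^ 2 - q ^ 3 : R) : ℍ[R])
      - (q * (x - y)) • omegaQuat p q := by
  -- the vector part of the product contains the cross product
  -- `(x, x², x³) × (y, y², y³) = xy (y − x) (xy, −(x + y), 1)`
  subst hsum
  rw [neg_eq_iff_eq_neg.mp hprod.symm]
  ext <;> simp only [Quaternion.re_add, Quaternion.imI_add, Quaternion.imJ_add, Quaternion.imK_add,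
    Quaternion.re_sub, Quaternion.imI_sub, Quaternion.imJ_sub, Quaternion.imK_sub,
    Quaternion.re_mul, Quaternion.imI_mul, Quaternion.imJ_mul, Quaternion.imK_mul,
    Quaternion.re_smul, Quaternion.imI_smul, Quaternion.imJ_smul, Quaternion.imK_smul,
    Quaternion.re_coe, Quaternion.imI_coe, Quaternion.imJ_coe, Quaternion.imK_coe] <;>
    simp [powQuat, omegaQuat] <;> ring

end Quaternion

theorem quatOfSeq_eq_binet {K : Type*} [Field K] {f : ℤ → K} {α β c d : K} (hα : α ≠ 0) (hβ : β ≠ 0)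
    (hf : ∀ n, f n = c * α ^ n + d * β ^ n) (n : ℤ) :
    quatOfSeq f n = (c * α ^ n) • powQuat α + (d * β ^ n) • powQuat β := by
  ext <;> simp only [Quaternion.re_add, Quaternion.imI_add, Quaternion.imJ_add, Quaternion.imK_add,
    Quaternion.re_smul, Quaternion.imI_smul, Quaternion.imJ_smul, Quaternion.imK_smul] <;>
    simp [quatOfSeq, powQuat, hf, zpow_add₀ hα, zpow_add₀ hβ] <;> ring

theorem mul_succ_sub_succ_mul_of_binet {K A : Type*} [Field K] [Ring A] [Algebra K A] {α β c d : K}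
    (hα : α ≠ 0) (hβ : β ≠ 0) {X Y : A} {Q : ℤ → A}
    (hQ : ∀ n, Q n = (c * α ^ n) • X + (d * β ^ n) • Y) (n m : ℤ) :
    Q n * Q (m + 1) - Q (n + 1) * Q m
      = (c * d * (α - β)) • ((β ^ n * α ^ m) • (Y * X) - (α ^ n * β ^ m) • (X * Y)) := by
  simp only [hQ, add_mul, mul_add, smul_mul_smul, zpow_add₀ hα, zpow_add₀ hβ, zpow_one]
  module

theorem vieta_of_eq_quadratic_roots {p q α β : ℝ} (hpq : 0 < p ^ 2 + 4 * q)
    (hα : α = (p + Real.sqrt (p ^ 2 + 4 * q)) / 2) (hβ : β = (p - Real.sqrt (p ^ 2 + 4 * q)) / 2) :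
    α + β = p ∧ α * β = -q ∧ α - β ≠ 0 := by
  have hs := Real.sq_sqrt hpq.le
  have hs0 := Real.sqrt_pos.mpr hpq
  subst hα hβ
  exact ⟨by ring, by linear_combination -hs / 4, by linarith⟩

theorem stmt_5 (p q : ℝ) (hpq : 0 < p^2 + 4*q)
    (hq : q ≠ 0)
    (α β : ℝ)
    (hα : α = (p + Real.sqrt (p^2 + 4*q)) / 2)
    (hβ : β = (p - Real.sqrt (p^2 + 4*q)) / 2)
    (F : ℤ → ℝ) (hF0 : F 0 = 0) (hF1 : F 1 = 1)
    (hF : ∀ n : ℤ, F (n+2) = p * F (n+1) + q * F n)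
    (L : ℤ → ℝ) (hL0 : L 0 = 2) (hL1 : L 1 = p)
    (hL : ∀ n : ℤ, L (n+2) = p * L (n+1) + q * L n)
    (a b : ℝ) (W : ℤ → ℝ) (hW0 : W 0 = a) (hW1 : W 1 = b)
    (hW : ∀ n : ℤ, W (n+2) = p * W (n+1) + q * W n)
    (A B : ℝ) (hA : A = b - a * β) (hB : B = b - a * α)
    (i j k : ℍ[ℝ])
    (hi : i = ⟨0,1,0,0⟩) (hj : j = ⟨0,0,1,0⟩) (hk : k = ⟨0,0,0,1⟩)
    (Qw : ℤ → ℍ[ℝ])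
    (hQw : ∀ n : ℤ, Qw n = ((W n : ℝ) : ℍ[ℝ]) + ((W (n+1) : ℝ) : ℍ[ℝ]) * i
      + ((W (n+2) : ℝ) : ℍ[ℝ]) * j + ((W (n+3) : ℝ) : ℍ[ℝ]) * k)
    (QL : ℤ → ℍ[ℝ])
    (hQL : ∀ n : ℤ, QL n = ((L n : ℝ) : ℍ[ℝ]) + ((L (n+1) : ℝ) : ℍ[ℝ]) * i
      + ((L (n+2) : ℝ) : ℍ[ℝ]) * j + ((L (n+3) : ℝ) : ℍ[ℝ]) * k)
    (ω : ℍ[ℝ]) (hω : ω = ((q : ℝ) : ℍ[ℝ]) * i + ((p : ℝ) : ℍ[ℝ]) * j - k)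
    (n m : ℤ) :
    Qw n * Qw (m+1) - Qw (n+1) * Qw m =
      (((-q)^m * (A * B) : ℝ) : ℍ[ℝ]) *
        ((QL 0 - ((1 - q + q^2 - q^3 : ℝ) : ℍ[ℝ])) * ((F (n-m) : ℝ) : ℍ[ℝ])
          - ((q : ℝ) : ℍ[ℝ]) * ω * ((L (n-m) : ℝ) : ℍ[ℝ])) := by
  obtain ⟨hsum, hprod, hne⟩ := vieta_of_eq_quadratic_roots hpq hα hβ
  have hαβ : α * β ≠ 0 := hprod ▸ neg_ne_zero.mpr hq
  have hα0 := left_ne_zero_of_mul hαβ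
  have hβ0 := right_ne_zero_of_mul hαβ
  have hWb := SatisfiesRec.eq_binet hq hsum hprod hW (c := A / (α - β)) (d := -B / (α - β))
    (by field_simp; rw [hW0, hA, hB]; ring) (by field_simp; rw [hW1, hA, hB]; ring)
  have hFb := SatisfiesRec.eq_binet hq hsum hprod hF (c := 1 / (α - β)) (d := -1 / (α - β))
    (by field_simp; rw [hF0]; ring) (by rw [hF1]; field_simp; ring)
  have hLb := SatisfiesRec.eq_binet hq hsum hprod hL (c := 1) (d := 1)
    (by rw [hL0]; norm_num) (by rw [hL1, ← hsum]; ring)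
  have hQw' : ∀ N, Qw N = (A / (α - β) * α ^ N) • powQuat α + (-B / (α - β) * β ^ N) • powQuat β := by
    intro N
    rw [hQw, coe_add_coe_mul_basis_eq_mk hi hj hk]
    exact quatOfSeq_eq_binet hα0 hβ0 hWb N
  have hQL0 : QL 0 = powQuat α + powQuat β := by
    rw [hQL, coe_add_coe_mul_basis_eq_mk hi hj hk]
    have h := quatOfSeq_eq_binet hα0 hβ0 hLb 0
    simp only [zpow_zero, mul_one, one_smul] at h
    exact h
  have hω' : ω = omegaQuat p q := by
    rw [hω, omegaQuat, ← coe_add_coe_mul_basis_eq_mk hi hj hk]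
    simp [sub_eq_add_neg]
  rw [mul_succ_sub_succ_mul_of_binet hα0 hβ0 hQw' n m, powQuat_mul_powQuat hsum hprod,
    powQuat_mul_powQuat (by linarith : β + α = p) (by linarith : β * α = -q), hQL0, hω', hFb, hLb]
  simp only [coe_mul_eq_smul, mul_coe_eq_smul]
  obtain ⟨r, rfl⟩ : ∃ r, n = r + m := ⟨n - m, by ring⟩
  rw [add_comm (powQuat β), add_sub_cancel_right, ← hprod, mul_zpow, zpow_add₀ hα0, zpow_add₀ hβ0]
  generalize powQuat α + powQuat β - _ = S
  match_scalars <;> field_simp <;> ring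
end

section
/- For every integer n (with q ≠ 0), the commutator of consecutive generalized Fibonacci quaternions satisfies Q_w(n)·Q_w(n+1) − Q_w(n+1)·Q_w(n) = 2·(−q)^(n+1)·AB·ω. -/
/-!
The commutator of two quaternions is twice the cross product of their vector parts. For
`Q_w(n)` and `Q_w(n+1)` the coordinates of that cross product are Cassini-type expressions
`W m * W (m + 2) - W (m + 1) ^ 2` (the middle one via d'Ocagne's
`W m * W (m + 3) - W (m + 1) * W (m + 2) = p * (W m * W (m + 2) - W (m + 1) ^ 2)`).
The recurrence multiplies the Cassini expression by `-q` at every shift, so it equals `(-q) ^ m`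
times its value at `0`, which is `-AB` by Vieta's formulas `α + β = p`, `α * β = -q`.
-/

open Quaternion

theorem eq_zpow_mul_of_forall_add_one {G₀ : Type*} [GroupWithZero G₀] {f : ℤ → G₀} {c : G₀}
    (hc : c ≠ 0) (hf : ∀ m, f (m + 1) = c * f m) (m : ℤ) : f m = c ^ m * f 0 := by
  induction m using Int.induction_on with
  | zero => simp
  | succ k ih => rw [hf, ih, ← mul_assoc, ← zpow_one_add₀ hc, add_comm]
  | pred k ih =>
    apply mul_left_cancel₀ hc
    rw [← hf, sub_add_cancel, ih, ← mul_assoc, ← zpow_one_add₀ hc, add_sub_cancel]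

namespace Quaternion

variable {R : Type*} [CommRing R]

theorem re_mul_sub_mul (x y : ℍ[R]) : (x * y - y * x).re = 0 := by
  rw [re_sub, re_mul, re_mul]; ring

theorem imI_mul_sub_mul (x y : ℍ[R]) :
    (x * y - y * x).imI = 2 * (x.imJ * y.imK - x.imK * y.imJ) := by
  rw [imI_sub, imI_mul, imI_mul]; ring

theorem imJ_mul_sub_mul (x y : ℍ[R]) :
    (x * y - y * x).imJ = 2 * (x.imK * y.imI - x.imI * y.imK) := by
  rw [imJ_sub, imJ_mul, imJ_mul]; ring

theorem imK_mul_sub_mul (x y : ℍ[R]) :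
    (x * y - y * x).imK = 2 * (x.imI * y.imJ - x.imJ * y.imI) := by
  rw [imK_sub, imK_mul, imK_mul]; ring

theorem coe_add_mul_basis_components {i j k : ℍ[R]} (hi : i = ⟨0, 1, 0, 0⟩)
    (hj : j = ⟨0, 0, 1, 0⟩) (hk : k = ⟨0, 0, 0, 1⟩) (r₀ r₁ r₂ r₃ : R) :
    ((r₀ : ℍ[R]) + r₁ * i + r₂ * j + r₃ * k).re = r₀ ∧
      ((r₀ : ℍ[R]) + r₁ * i + r₂ * j + r₃ * k).imI = r₁ ∧
      ((r₀ : ℍ[R]) + r₁ * i + r₂ * j + r₃ * k).imJ = r₂ ∧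
      ((r₀ : ℍ[R]) + r₁ * i + r₂ * j + r₃ * k).imK = r₃ := by
  -- `⟨0, 1, 0, 0⟩` elaborates in `ℍ[R,-1,0,-1]`, where the `ℍ[R]` simp lemmas do not fire,
  -- so `i`, `j`, `k` stay abstract and only their components are used.
  obtain ⟨hi₀, hi₁, hi₂, hi₃⟩ : i.re = 0 ∧ i.imI = 1 ∧ i.imJ = 0 ∧ i.imK = 0 :=
    hi ▸ ⟨rfl, rfl, rfl, rfl⟩
  obtain ⟨hj₀, hj₁, hj₂, hj₃⟩ : j.re = 0 ∧ j.imI = 0 ∧ j.imJ = 1 ∧ j.imK = 0 :=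
    hj ▸ ⟨rfl, rfl, rfl, rfl⟩
  obtain ⟨hk₀, hk₁, hk₂, hk₃⟩ : k.re = 0 ∧ k.imI = 0 ∧ k.imJ = 0 ∧ k.imK = 1 :=
    hk ▸ ⟨rfl, rfl, rfl, rfl⟩
  simp [hi₀, hi₁, hi₂, hi₃, hj₀, hj₁, hj₂, hj₃, hk₀, hk₁, hk₂, hk₃]

end Quaternion

section Horadam

variable {R : Type*} [CommRing R] {p q : R} {W : ℤ → R}

theorem horadam_cassini_add_one (hW : ∀ n, W (n + 2) = p * W (n + 1) + q * W n) (m : ℤ) :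
    W (m + 1) * W (m + 3) - W (m + 2) ^ 2 = -q * (W m * W (m + 2) - W (m + 1) ^ 2) := by
  rw [show m + 3 = m + 1 + 2 by ring, hW (m + 1), add_assoc, one_add_one_eq_two, hW m]
  ring

theorem horadam_dOcagne (hW : ∀ n, W (n + 2) = p * W (n + 1) + q * W n) (m : ℤ) :
    W m * W (m + 3) - W (m + 1) * W (m + 2) = p * (W m * W (m + 2) - W (m + 1) ^ 2) := by
  rw [show m + 3 = m + 1 + 2 by ring, hW (m + 1), add_assoc, one_add_one_eq_two, hW m]
  ring

theorem horadam_cassini {K : Type*} [Field K] {p q : K} {W : ℤ → K}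
    (hW : ∀ n, W (n + 2) = p * W (n + 1) + q * W n) (hq : q ≠ 0) (m : ℤ) :
    W m * W (m + 2) - W (m + 1) ^ 2 = (-q) ^ m * (W 0 * W 2 - W 1 ^ 2) := by
  refine eq_zpow_mul_of_forall_add_one (f := fun m ↦ W m * W (m + 2) - W (m + 1) ^ 2)
    (neg_ne_zero.2 hq) (fun m ↦ ?_) m
  simpa only [add_assoc, one_add_one_eq_two, show (1 : ℤ) + 2 = 3 by norm_num]
    using horadam_cassini_add_one hW m

end Horadam

theorem stmt_6 (p q : ℝ) (hpq : 0 < p^2 + 4*q)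
    (hq : q ≠ 0)
    (α β : ℝ)
    (hα : α = (p + Real.sqrt (p^2 + 4*q)) / 2)
    (hβ : β = (p - Real.sqrt (p^2 + 4*q)) / 2)
    (a b : ℝ) (W : ℤ → ℝ) (hW0 : W 0 = a) (hW1 : W 1 = b)
    (hW : ∀ n : ℤ, W (n+2) = p * W (n+1) + q * W n)
    (A B : ℝ) (hA : A = b - a * β) (hB : B = b - a * α)
    (i j k : ℍ[ℝ])
    (hi : i = ⟨0,1,0,0⟩) (hj : j = ⟨0,0,1,0⟩) (hk : k = ⟨0,0,0,1⟩)
    (Qw : ℤ → ℍ[ℝ])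
    (hQw : ∀ n : ℤ, Qw n = ((W n : ℝ) : ℍ[ℝ]) + ((W (n+1) : ℝ) : ℍ[ℝ]) * i
      + ((W (n+2) : ℝ) : ℍ[ℝ]) * j + ((W (n+3) : ℝ) : ℍ[ℝ]) * k)
    (ω : ℍ[ℝ]) (hω : ω = ((q : ℝ) : ℍ[ℝ]) * i + ((p : ℝ) : ℍ[ℝ]) * j - k)
    (n : ℤ) :
    Qw n * Qw (n+1) - Qw (n+1) * Qw n = ((2 * (-q)^(n+1) * (A * B) : ℝ) : ℍ[ℝ]) * ω := by
  have hAB : A * B = -(W 0 * W 2 - W 1 ^ 2) := by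
    have hW2 : W 2 = p * W 1 + q * W 0 := by simpa using hW 0
    rw [hA, hB, hα, hβ, hW2, hW0, hW1]
    linear_combination (-(a ^ 2) / 4) * Real.sq_sqrt hpq.le
  have cassini (m : ℤ) : W m * W (m + 2) - W (m + 1) ^ 2 = -((-q) ^ m * (A * B)) := by
    rw [horadam_cassini hW hq, hAB, mul_neg, neg_neg]
  have hQ (m : ℤ) := coe_add_mul_basis_components hi hj hk (W m) (W (m + 1)) (W (m + 2)) (W (m + 3))
  simp only [← hQw] at hQ
  have hω' := coe_add_mul_basis_components hi hj hk 0 q p (-1)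
  rw [show ((0 : ℝ) : ℍ[ℝ]) + q * i + p * j + ((-1 : ℝ) : ℍ[ℝ]) * k = ω by
    rw [hω]; push_cast; noncomm_ring] at hω'
  have c₁ := cassini (n + 1)
  have c₂ := cassini (n + 2)
  have d := horadam_dOcagne hW (n + 1)
  have hz : (-q) ^ (n + 2) = (-q) ^ (n + 1) * -q := by
    rw [← zpow_add_one₀ (neg_ne_zero.2 hq), add_assoc, one_add_one_eq_two]
  simp only [add_assoc, Int.reduceAdd] at c₁ c₂ d
  rw [coe_mul_eq_smul]
  ext
  · rw [re_mul_sub_mul, re_smul, hω'.1, smul_zero]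
  · simp only [imI_mul_sub_mul, imI_smul, hQ, hω', smul_eq_mul, add_assoc, Int.reduceAdd]
    linear_combination 2 * c₂ - 2 * (A * B) * hz
  · simp only [imJ_mul_sub_mul, imJ_smul, hQ, hω', smul_eq_mul, add_assoc, Int.reduceAdd]
    linear_combination -2 * d - 2 * p * c₁
  · simp only [imK_mul_sub_mul, imK_smul, hQ, hω', smul_eq_mul, add_assoc, Int.reduceAdd]
    linear_combination 2 * c₁
end

section
/- For all integers n, r and s (with q ≠ 0): Q_L(n+r)·Q_F(n+s) − Q_L(n+s)·Q_F(n+r) = 2·(−q)^(n+r)·F(s−r)·(Q_L(0) − [q]). -/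
/-!
Write `α̂ = 1 + α i + α² j + α³ k`. Binet's formulas `(α - β) F m = αᵐ - βᵐ` and
`L m = αᵐ + βᵐ` give `(α - β) Q_F(m) = αᵐ α̂ - βᵐ β̂` and `Q_L(m) = αᵐ α̂ + βᵐ β̂`.
In `(α - β)(Q_L(a) Q_F(b) - Q_L(b) Q_F(a))` the squares `α̂²`, `β̂²` cancel, leaving
`(βᵃ αᵇ - αᵃ βᵇ)(α̂ β̂ + β̂ α̂) = (α - β)(αβ)ᵃ F(b - a) (α̂ β̂ + β̂ α̂)`. Finally the
anticommutator is `α̂ β̂ + β̂ α̂ = 2 (α̂ + β̂ - (1 + αβ + (αβ)² + (αβ)³)) = 2 (Q_L(0) - [q])`,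
since `α̂ + β̂ = Q_L(0)` and `αβ = -q`.
-/

open Quaternion

section Recurrence

variable {K : Type*} [Field K]

def SatisfiesRecurrence (p q : K) (f : ℤ → K) : Prop :=
  ∀ n : ℤ, f (n + 2) = p * f (n + 1) + q * f n

theorem SatisfiesRecurrence.ext {p q : K} (hq : q ≠ 0) {f g : ℤ → K}
    (hf : SatisfiesRecurrence p q f) (hg : SatisfiesRecurrence p q g)
    (h0 : f 0 = g 0) (h1 : f 1 = g 1) : f = g := by
  suffices h : ∀ n : ℤ, f n = g n ∧ f (n + 1) = g (n + 1) from funext fun n => (h n).1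
  intro n
  induction n using Int.induction_on with
  | zero => exact ⟨h0, by simpa using h1⟩
  | succ m ih =>
    refine ⟨ih.2, ?_⟩
    rw [add_assoc, one_add_one_eq_two, hf, hg, ih.1, ih.2]
  | pred m ih =>
    refine ⟨mul_left_cancel₀ hq ?_, by simpa using ih.1⟩
    have hfm := hf (-m - 1)
    have hgm := hg (-m - 1)
    rw [show -(m : ℤ) - 1 + 2 = -m + 1 by ring, sub_add_cancel] at hfm hgm
    linear_combination hgm - hfm + ih.2 - p * ih.1

theorem satisfiesRecurrence_zpow {p q α : K} (hα : α ≠ 0) (hα2 : α ^ 2 = p * α + q) :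
    SatisfiesRecurrence p q (fun n => α ^ n) := by
  intro n
  simp only [zpow_add₀ hα, zpow_one, zpow_two]
  linear_combination α ^ n * hα2

end Recurrence

section Binet

variable {K : Type*} [Field K] {p q α β : K}

theorem satisfiesRecurrence_zpow_of_vieta (hq : q ≠ 0) (hsum : α + β = p) (hprod : α * β = -q) :
    SatisfiesRecurrence p q (fun n => α ^ n) ∧ SatisfiesRecurrence p q (fun n => β ^ n) := by
  have hαβ : α * β ≠ 0 := hprod ▸ neg_ne_zero.mpr hq
  exact ⟨satisfiesRecurrence_zpow (left_ne_zero_of_mul hαβ)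
      (by linear_combination α * hsum - hprod),
    satisfiesRecurrence_zpow (right_ne_zero_of_mul hαβ) (by linear_combination β * hsum - hprod)⟩

theorem binet_fib (hq : q ≠ 0) (hsum : α + β = p) (hprod : α * β = -q)
    {F : ℤ → K} (hF0 : F 0 = 0) (hF1 : F 1 = 1) (hF : SatisfiesRecurrence p q F) (n : ℤ) :
    (α - β) * F n = α ^ n - β ^ n := by
  obtain ⟨hαrec, hβrec⟩ := satisfiesRecurrence_zpow_of_vieta hq hsum hprod
  refine congrFun (SatisfiesRecurrence.ext (p := p) hq (f := fun n => (α - β) * F n)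
    (g := fun n => α ^ n - β ^ n) (fun n => ?_) (fun n => ?_) ?_ ?_) n
  · simp only; linear_combination (α - β) * hF n
  · simp only; linear_combination hαrec n - hβrec n
  · simp [hF0]
  · simp [hF1]

theorem binet_lucas (hq : q ≠ 0) (hsum : α + β = p) (hprod : α * β = -q)
    {L : ℤ → K} (hL0 : L 0 = 2) (hL1 : L 1 = p) (hL : SatisfiesRecurrence p q L) (n : ℤ) :
    L n = α ^ n + β ^ n := by
  obtain ⟨hαrec, hβrec⟩ := satisfiesRecurrence_zpow_of_vieta hq hsum hprod
  refine congrFun (SatisfiesRecurrence.ext (p := p) hq (g := fun n => α ^ n + β ^ n) hL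
    (fun n => ?_) ?_ ?_) n
  · simp only; linear_combination hαrec n + hβrec n
  · norm_num [hL0]
  · simp [hL1, hsum]

end Binet

theorem smul_add_smul_mul_sub_swap {R A : Type*} [CommRing R] [Ring A] [Algebra R A]
    (a b c d : R) (x y : A) :
    (a • x + b • y) * (c • x - d • y) - (c • x + d • y) * (a • x - b • y) =
      (b * c - a * d) • (x * y + y * x) := by
  simp only [add_mul, mul_sub, smul_mul_smul_comm]
  module

theorem zpow_mul_zpow_sub_zpow_mul_zpow {K : Type*} [Field K] {α β : K} (hα : α ≠ 0) (hβ : β ≠ 0)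
    (a b : ℤ) :
    β ^ a * α ^ b - α ^ a * β ^ b = (α * β) ^ a * (α ^ (b - a) - β ^ (b - a)) := by
  rw [mul_zpow, zpow_sub₀ hα, zpow_sub₀ hβ]
  field_simp

namespace Quaternion

section CommRing

variable {R : Type*} [CommRing R]

def ofSeq (G : ℤ → R) (n : ℤ) : ℍ[R] := ⟨G n, G (n + 1), G (n + 2), G (n + 3)⟩

theorem coe_add_coe_mul_eq_ofSeq {i j k : ℍ[R]} (hi : i = ⟨0, 1, 0, 0⟩) (hj : j = ⟨0, 0, 1, 0⟩)
    (hk : k = ⟨0, 0, 0, 1⟩) (G : ℤ → R) (n : ℤ) :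
    (G n : ℍ[R]) + (G (n + 1) : ℍ[R]) * i + (G (n + 2) : ℍ[R]) * j + (G (n + 3) : ℍ[R]) * k =
      ofSeq G n := by
  ext <;> simp only [re_add, imI_add, imJ_add, imK_add, coe_mul_eq_smul, re_smul, imI_smul,
    imJ_smul, imK_smul, re_coe, imI_coe, imJ_coe, imK_coe] <;> simp [ofSeq, hi, hj, hk]

def ofPowers (a : R) : ℍ[R] := ⟨1, a, a ^ 2, a ^ 3⟩

theorem ofPowers_mul_add_mul_comm (a b : R) :
    ofPowers a * ofPowers b + ofPowers b * ofPowers a =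
      (2 : R) • (ofPowers a + ofPowers b -
        ((1 + a * b + (a * b) ^ 2 + (a * b) ^ 3 : R) : ℍ[R])) := by
  ext <;> simp only [re_add, imI_add, imJ_add, imK_add, re_sub, imI_sub, imJ_sub, imK_sub,
    re_mul, imI_mul, imJ_mul, imK_mul, re_smul, imI_smul, imJ_smul, imK_smul, re_coe, imI_coe,
    imJ_coe, imK_coe, smul_eq_mul] <;> simp only [ofPowers] <;> ring

end CommRing

variable {K : Type*} [Field K] {p q α β : K}

theorem smul_ofSeq_eq_of_binet {a b c : K} (hα : α ≠ 0) (hβ : β ≠ 0)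
    {G : ℤ → K} (hG : ∀ m, c * G m = a * α ^ m + b * β ^ m) (n : ℤ) :
    c • ofSeq G n = (a * α ^ n) • ofPowers α + (b * β ^ n) • ofPowers β := by
  ext <;> simp only [re_add, imI_add, imJ_add, imK_add, re_smul, imI_smul, imJ_smul, imK_smul,
    smul_eq_mul] <;>
    simp only [ofSeq, ofPowers, hG, zpow_add₀ hα, zpow_add₀ hβ, zpow_ofNat] <;> ring

theorem smul_ofSeq_fib (hq : q ≠ 0) (hsum : α + β = p) (hprod : α * β = -q)
    {F : ℤ → K} (hF0 : F 0 = 0) (hF1 : F 1 = 1) (hF : SatisfiesRecurrence p q F) (n : ℤ) :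
    (α - β) • ofSeq F n = α ^ n • ofPowers α - β ^ n • ofPowers β := by
  have hαβ : α * β ≠ 0 := hprod ▸ neg_ne_zero.mpr hq
  rw [smul_ofSeq_eq_of_binet (left_ne_zero_of_mul hαβ) (right_ne_zero_of_mul hαβ) (a := 1) (b := -1)
    (fun m => by rw [binet_fib hq hsum hprod hF0 hF1 hF m]; ring)]
  simp [sub_eq_add_neg, neg_smul]

theorem ofSeq_lucas (hq : q ≠ 0) (hsum : α + β = p) (hprod : α * β = -q)
    {L : ℤ → K} (hL0 : L 0 = 2) (hL1 : L 1 = p) (hL : SatisfiesRecurrence p q L) (n : ℤ) :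
    ofSeq L n = α ^ n • ofPowers α + β ^ n • ofPowers β := by
  have hαβ : α * β ≠ 0 := hprod ▸ neg_ne_zero.mpr hq
  rw [← one_smul K (ofSeq L n), smul_ofSeq_eq_of_binet (left_ne_zero_of_mul hαβ)
    (right_ne_zero_of_mul hαβ) (a := 1) (b := 1)
    (fun m => by rw [binet_lucas hq hsum hprod hL0 hL1 hL m]; ring)]
  simp

theorem ofSeq_lucas_mul_ofSeq_fib_sub (hq : q ≠ 0) (hsum : α + β = p) (hprod : α * β = -q)
    (hsub : α - β ≠ 0) {F L : ℤ → K} (hF0 : F 0 = 0) (hF1 : F 1 = 1)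
    (hF : SatisfiesRecurrence p q F) (hL0 : L 0 = 2) (hL1 : L 1 = p)
    (hL : SatisfiesRecurrence p q L) (a b : ℤ) :
    ofSeq L a * ofSeq F b - ofSeq L b * ofSeq F a =
      (2 * (-q) ^ a * F (b - a)) • (ofSeq L 0 - ((1 - q + q ^ 2 - q ^ 3 : K) : ℍ[K])) := by
  have hαβ : α * β ≠ 0 := hprod ▸ neg_ne_zero.mpr hq
  have hcoef : β ^ a * α ^ b - α ^ a * β ^ b = (α - β) * ((-q) ^ a * F (b - a)) := by
    rw [zpow_mul_zpow_sub_zpow_mul_zpow (left_ne_zero_of_mul hαβ) (right_ne_zero_of_mul hαβ),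
      ← binet_fib hq hsum hprod hF0 hF1 hF, hprod]
    ring
  have hL0' : ofSeq L 0 = ofPowers α + ofPowers β := by simp [ofSeq_lucas hq hsum hprod hL0 hL1 hL]
  apply smul_right_injective ℍ[K] hsub
  calc (α - β) • (ofSeq L a * ofSeq F b - ofSeq L b * ofSeq F a)
      = ofSeq L a * ((α - β) • ofSeq F b) - ofSeq L b * ((α - β) • ofSeq F a) := by
        rw [smul_sub, mul_smul_comm, mul_smul_comm]
    _ = (β ^ a * α ^ b - α ^ a * β ^ b) • (ofPowers α * ofPowers β + ofPowers β * ofPowers α) := by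
        rw [smul_ofSeq_fib hq hsum hprod hF0 hF1 hF, smul_ofSeq_fib hq hsum hprod hF0 hF1 hF,
          ofSeq_lucas hq hsum hprod hL0 hL1 hL, ofSeq_lucas hq hsum hprod hL0 hL1 hL,
          smul_add_smul_mul_sub_swap]
    _ = _ := by
        rw [hcoef, ofPowers_mul_add_mul_comm, ← hL0', hprod,
          show 1 + -q + (-q) ^ 2 + (-q) ^ 3 = 1 - q + q ^ 2 - q ^ 3 by ring]
        module

end Quaternion

theorem vieta_of_sqrt_discrim {p q α β : ℝ} (hpq : 0 ≤ p ^ 2 + 4 * q)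
    (hα : α = (p + √(p ^ 2 + 4 * q)) / 2) (hβ : β = (p - √(p ^ 2 + 4 * q)) / 2) :
    α + β = p ∧ α * β = -q ∧ α - β = √(p ^ 2 + 4 * q) := by
  subst hα hβ
  refine ⟨by ring, ?_, by ring⟩
  linear_combination (-1 / 4 : ℝ) * Real.sq_sqrt hpq

theorem stmt_7 (p q : ℝ) (hpq : 0 < p^2 + 4*q)
    (hq : q ≠ 0)
    (α β : ℝ)
    (hα : α = (p + Real.sqrt (p^2 + 4*q)) / 2)
    (hβ : β = (p - Real.sqrt (p^2 + 4*q)) / 2)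
    (F : ℤ → ℝ) (hF0 : F 0 = 0) (hF1 : F 1 = 1)
    (hF : ∀ n : ℤ, F (n+2) = p * F (n+1) + q * F n)
    (L : ℤ → ℝ) (hL0 : L 0 = 2) (hL1 : L 1 = p)
    (hL : ∀ n : ℤ, L (n+2) = p * L (n+1) + q * L n)
    (i j k : ℍ[ℝ])
    (hi : i = ⟨0,1,0,0⟩) (hj : j = ⟨0,0,1,0⟩) (hk : k = ⟨0,0,0,1⟩)
    (QF : ℤ → ℍ[ℝ])
    (hQF : ∀ n : ℤ, QF n = ((F n : ℝ) : ℍ[ℝ]) + ((F (n+1) : ℝ) : ℍ[ℝ]) * i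
      + ((F (n+2) : ℝ) : ℍ[ℝ]) * j + ((F (n+3) : ℝ) : ℍ[ℝ]) * k)
    (QL : ℤ → ℍ[ℝ])
    (hQL : ∀ n : ℤ, QL n = ((L n : ℝ) : ℍ[ℝ]) + ((L (n+1) : ℝ) : ℍ[ℝ]) * i
      + ((L (n+2) : ℝ) : ℍ[ℝ]) * j + ((L (n+3) : ℝ) : ℍ[ℝ]) * k)
    (n r s : ℤ) :
    QL (n+r) * QF (n+s) - QL (n+s) * QF (n+r) =
      ((2 * (-q)^(n+r) * F (s-r) : ℝ) : ℍ[ℝ]) * (QL 0 - ((1 - q + q^2 - q^3 : ℝ) : ℍ[ℝ])) := by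
  obtain ⟨hsum, hprod, hsub⟩ := vieta_of_sqrt_discrim hpq.le hα hβ
  have hQF' : QF = ofSeq F :=
    funext fun m => (hQF m).trans (coe_add_coe_mul_eq_ofSeq hi hj hk F m)
  have hQL' : QL = ofSeq L :=
    funext fun m => (hQL m).trans (coe_add_coe_mul_eq_ofSeq hi hj hk L m)
  rw [hQF', hQL', ofSeq_lucas_mul_ofSeq_fib_sub hq hsum hprod (hsub ▸ (Real.sqrt_pos.mpr hpq).ne')
    hF0 hF1 hF hL0 hL1 hL, add_sub_add_left_eq_sub, coe_mul_eq_smul]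
end

section
/- In the real quaternions, α̲² = (Q_L(0) − r_{p,q}) + Δ·(Q_F(0) − s_{p,q}), where r_{p,q} = 1 + (p/2)(F(2) + F(4) + F(6)) + q(F(1) + F(3) + F(5)) and s_{p,q} = (1/2)(F(2) + F(4) + F(6)). -/
open Quaternion

/-!
Write `α̲ = 1 + v` with `v` purely imaginary, so `α̲² = 1 - |v|² + 2v`. The Binet-type
identity `2αⁿ = L(n) + Δ F(n)` turns `2v` into the imaginary part of `Q_L(0) + Δ Q_F(0)`,
and `αⁿ = α F(n) + q F(n-1)` turns `|v|² = α² + α⁴ + α⁶` into `r_{p,q} + Δ s_{p,q} - 1`,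
using `Δ = 2α - p`. Both identities hold because their two sides satisfy the same second
order recurrence and agree at `n = 0, 1`.
-/

namespace LinearRecurrence

/-- `u (n + 2) = p * u (n + 1) + q * u n`; Mathlib lists coefficients from `u n` upwards. -/
def secondOrder {R : Type*} [CommSemiring R] (p q : R) : LinearRecurrence R := ⟨2, ![q, p]⟩

variable {R : Type*} [CommRing R] {p q : R}

theorem isSolution_secondOrder_iff {u : ℕ → R} :
    (secondOrder p q).IsSolution u ↔ ∀ n, u (n + 2) = p * u (n + 1) + q * u n := by
  change (∀ n, u (n + 2) = ∑ i : Fin 2, ![q, p] i * u (n + i)) ↔ _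
  simp only [Fin.sum_univ_two, Matrix.cons_val_zero, Matrix.cons_val_one, Fin.val_zero,
    Fin.val_one, add_zero, add_comm (q * _)]

theorem isSolution_secondOrder_natCast {u : ℤ → R}
    (hu : ∀ n : ℤ, u (n + 2) = p * u (n + 1) + q * u n) :
    (secondOrder p q).IsSolution (fun n : ℕ => u n) :=
  isSolution_secondOrder_iff.mpr fun n => by push_cast; exact hu n

theorem eq_of_isSolution_secondOrder {u v : ℕ → R} (hu : (secondOrder p q).IsSolution u)
    (hv : (secondOrder p q).IsSolution v) (h0 : u 0 = v 0) (h1 : u 1 = v 1) : u = v := by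
  refine ((secondOrder p q).eq_iff_eqOn_range_order u v hu hv).mpr fun n hn => ?_
  obtain rfl | rfl : n = 0 ∨ n = 1 := by simp [secondOrder] at hn; omega
  exacts [h0, h1]

end LinearRecurrence

section Binet

open LinearRecurrence

variable {R : Type*} [CommRing R] {p q α : R} (hα : α ^ 2 = p * α + q)
  {F L : ℕ → R} (hF : (secondOrder p q).IsSolution F) (hF0 : F 0 = 0) (hF1 : F 1 = 1)
include hα hF hF0 hF1

theorem pow_succ_eq_mul_fib_add_mul_fib (n : ℕ) : α ^ (n + 1) = α * F (n + 1) + q * F n := by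
  have hF' := isSolution_secondOrder_iff.mp hF
  refine congrFun (eq_of_isSolution_secondOrder (p := p) (q := q) (u := fun n => α ^ (n + 1))
    (v := fun n => α * F (n + 1) + q * F n) ?_ ?_ ?_ ?_) n
  · exact isSolution_secondOrder_iff.mpr fun n => by linear_combination α ^ (n + 1) * hα
  · exact isSolution_secondOrder_iff.mpr fun n => by
      linear_combination α * hF' (n + 1) + q * hF' n
  · simp [hF0, hF1]
  · simp [hF0, hF1, hF' 0, hα, mul_comm]

theorem two_mul_pow_eq_lucas_add_mul_fib (hL : (secondOrder p q).IsSolution L) (hL0 : L 0 = 2)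
    (hL1 : L 1 = p) (n : ℕ) : 2 * α ^ n = L n + (2 * α - p) * F n := by
  have hF' := isSolution_secondOrder_iff.mp hF
  have hL' := isSolution_secondOrder_iff.mp hL
  refine congrFun (eq_of_isSolution_secondOrder (p := p) (q := q) (u := fun n => 2 * α ^ n)
    (v := fun n => L n + (2 * α - p) * F n) ?_ ?_ ?_ ?_) n
  · exact isSolution_secondOrder_iff.mpr fun n => by linear_combination 2 * α ^ n * hα
  · exact isSolution_secondOrder_iff.mpr fun n => by
      linear_combination hL' n + (2 * α - p) * hF' n
  · simp [hF0, hL0]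
  · simp [hF1, hL1]

end Binet

namespace Quaternion

variable {R : Type*} [CommRing R] (x : ℍ[R])

theorem re_sq : (x ^ 2).re = x.re ^ 2 - x.imI ^ 2 - x.imJ ^ 2 - x.imK ^ 2 := by
  rw [sq, re_mul]; ring

theorem imI_sq : (x ^ 2).imI = 2 * x.re * x.imI := by
  rw [sq, imI_mul]; ring

theorem imJ_sq : (x ^ 2).imJ = 2 * x.re * x.imJ := by
  rw [sq, imJ_mul]; ring

theorem imK_sq : (x ^ 2).imK = 2 * x.re * x.imK := by
  rw [sq, imK_mul]; ring

end Quaternion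

open LinearRecurrence in
theorem stmt_8 (p q : ℝ) (hpq : 0 < p^2 + 4*q)
    (α β : ℝ)
    (hα : α = (p + Real.sqrt (p^2 + 4*q)) / 2)
    (hβ : β = (p - Real.sqrt (p^2 + 4*q)) / 2)
    (Δ : ℝ) (hΔ : Δ = α - β)
    (F : ℤ → ℝ) (hF0 : F 0 = 0) (hF1 : F 1 = 1)
    (hF : ∀ n : ℤ, F (n+2) = p * F (n+1) + q * F n)
    (L : ℤ → ℝ) (hL0 : L 0 = 2) (hL1 : L 1 = p)
    (hL : ∀ n : ℤ, L (n+2) = p * L (n+1) + q * L n)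
    (i j k : ℍ[ℝ])
    (hi : i = ⟨0,1,0,0⟩) (hj : j = ⟨0,0,1,0⟩) (hk : k = ⟨0,0,0,1⟩)
    (QF : ℤ → ℍ[ℝ])
    (hQF : ∀ n : ℤ, QF n = ((F n : ℝ) : ℍ[ℝ]) + ((F (n+1) : ℝ) : ℍ[ℝ]) * i
      + ((F (n+2) : ℝ) : ℍ[ℝ]) * j + ((F (n+3) : ℝ) : ℍ[ℝ]) * k)
    (QL : ℤ → ℍ[ℝ])
    (hQL : ∀ n : ℤ, QL n = ((L n : ℝ) : ℍ[ℝ]) + ((L (n+1) : ℝ) : ℍ[ℝ]) * i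
      + ((L (n+2) : ℝ) : ℍ[ℝ]) * j + ((L (n+3) : ℝ) : ℍ[ℝ]) * k)
    (uα : ℍ[ℝ])
    (huα : uα = 1 + ((α : ℝ) : ℍ[ℝ]) * i + ((α^2 : ℝ) : ℍ[ℝ]) * j + ((α^3 : ℝ) : ℍ[ℝ]) * k)
    (rpq spq : ℝ)
    (hrpq : rpq = 1 + (p/2) * (F 2 + F 4 + F 6) + q * (F 1 + F 3 + F 5))
    (hspq : spq = (1/2) * (F 2 + F 4 + F 6)) :
    uα ^ 2 = (QL 0 - ((rpq : ℝ) : ℍ[ℝ])) + ((Δ : ℝ) : ℍ[ℝ]) * (QF 0 - ((spq : ℝ) : ℍ[ℝ])) := by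
  have hsqrt := Real.sq_sqrt hpq.le
  have hroot : α ^ 2 = p * α + q := by rw [hα]; linear_combination hsqrt / 4
  have hΔα : Δ = 2 * α - p := by rw [hΔ, hα, hβ]; ring
  have hFsol := isSolution_secondOrder_natCast hF
  have hpow (n : ℕ) : α ^ (n + 1) = α * F (n + 1) + q * F n := by
    exact_mod_cast pow_succ_eq_mul_fib_add_mul_fib hroot hFsol hF0 hF1 n
  have hbinet (n : ℕ) : 2 * α ^ n = L n + (2 * α - p) * F n := by
    exact_mod_cast two_mul_pow_eq_lucas_add_mul_fib hroot hFsol hF0 hF1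
      (isSolution_secondOrder_natCast hL) hL0 hL1 n
  -- `⟨0,1,0,0⟩` elaborates at type `ℍ[ℝ,-1,0,-1]`, where the `ℍ[ℝ]` simp lemmas do not fire,
  -- so `i`, `j`, `k` are kept abstract and only their coordinates are used.
  obtain ⟨hi0, hi1, hi2, hi3⟩ : i.re = 0 ∧ i.imI = 1 ∧ i.imJ = 0 ∧ i.imK = 0 := by
    subst hi; exact ⟨rfl, rfl, rfl, rfl⟩
  obtain ⟨hj0, hj1, hj2, hj3⟩ : j.re = 0 ∧ j.imI = 0 ∧ j.imJ = 1 ∧ j.imK = 0 := by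
    subst hj; exact ⟨rfl, rfl, rfl, rfl⟩
  obtain ⟨hk0, hk1, hk2, hk3⟩ : k.re = 0 ∧ k.imI = 0 ∧ k.imJ = 0 ∧ k.imK = 1 := by
    subst hk; exact ⟨rfl, rfl, rfl, rfl⟩
  subst huα hrpq hspq hΔα
  ext <;> simp only [re_sq, imI_sq, imJ_sq, imK_sq, hQF, hQL, re_add, re_sub, re_mul, re_coe,
    re_one, imI_add, imI_sub, imI_mul, imI_coe, imI_one, imJ_add, imJ_sub, imJ_mul, imJ_coe, imJ_one,
    imK_add, imK_sub, imK_mul, imK_coe, imK_one, hi0, hi1, hi2, hi3, hj0, hj1, hj2, hj3,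
    hk0, hk1, hk2, hk3, zero_add]
  · linear_combination (norm := (push_cast; ring_nf))
      -hL0 - (2 * α - p) * hF0 - hpow 1 - hpow 3 - hpow 5
  · linear_combination (norm := (push_cast; ring_nf)) hbinet 1
  · linear_combination (norm := (push_cast; ring_nf)) hbinet 2
  · linear_combination (norm := (push_cast; ring_nf)) hbinet 3
end

section
/- In the real quaternions, β̲² = (Q_L(0) − r_{p,q}) − Δ·(Q_F(0) − s_{p,q}), where r_{p,q} = 1 + (p/2)(F(2) + F(4) + F(6)) + q(F(1) + F(3) + F(5)) and s_{p,q} = (1/2)(F(2) + F(4) + F(6)). -/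
/-!
Everything follows from the Binet-type identity `2 β ^ n = L n - Δ F n`. Applied coordinatewise it
gives `Q_L(0) - Δ Q_F(0) = 2 β̲`. Since `β̲` has real part `1`, it satisfies
`β̲ ^ 2 = 2 β̲ - |β̲| ^ 2` with `|β̲| ^ 2 = 1 + β ^ 2 + β ^ 4 + β ^ 6`. Using Binet again, together
with `L (n + 1) = p F (n + 1) + 2 q F n`, this last sum is `r_{p,q} - Δ s_{p,q}`.
-/

open Quaternion

theorem Quaternion.sq_eq_two_re_mul_sub_normSq {R : Type*} [CommRing R] (a : ℍ[R]) :
    a ^ 2 = 2 * a.re * a - normSq a := by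
  have h := congrArg (a * ·) (self_add_star a)
  simp only [mul_add, self_mul_star] at h
  rw [sq, eq_sub_iff_add_eq, h, ((Commute.ofNat_left 2 a).mul_left (coe_commute a.re a)).eq]

theorem Quaternion.mk_eq_coe_add_mul_basis {R : Type*} [CommRing R] (a b c d : R) :
    (⟨a, b, c, d⟩ : ℍ[R]) = a + b * ⟨0, 1, 0, 0⟩ + c * ⟨0, 0, 1, 0⟩ + d * ⟨0, 0, 0, 1⟩ := by
  ext <;> simp

theorem sq_eq_mul_add_of_eq_sub_sqrt {p q β : ℝ} (hd : 0 ≤ p ^ 2 + 4 * q)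
    (hβ : β = (p - √(p ^ 2 + 4 * q)) / 2) : β ^ 2 = p * β + q := by
  rw [hβ]
  linear_combination Real.sq_sqrt hd / 4

section Recurrence

variable {R : Type*} [CommRing R] {p q : R} {F L : ℤ → R}

theorem lucas_succ_eq_fib (hF0 : F 0 = 0) (hF1 : F 1 = 1)
    (hF : ∀ n, F (n + 2) = p * F (n + 1) + q * F n)
    (hL0 : L 0 = 2) (hL1 : L 1 = p) (hL : ∀ n, L (n + 2) = p * L (n + 1) + q * L n) (n : ℕ) :
    L (n + 1) = p * F (n + 1) + 2 * q * F n := by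
  induction n using Nat.twoStepInduction with
  | zero => simp [hL1, hF0, hF1]
  | one =>
    have hL2 := hL 0
    have hF2 := hF 0
    norm_num [hL0, hL1, hF0, hF1] at hL2 hF2 ⊢
    rw [hL2, hF2]
    ring
  | more n ih₀ ih₁ =>
    push_cast at *
    rw [show (n : ℤ) + 2 + 1 = n + 1 + 2 by ring, hL, hF, hF]
    linear_combination p * ih₁ + q * ih₀

theorem two_mul_pow_eq_lucas_sub_mul_fib {β : R} (hβ : β ^ 2 = p * β + q)
    (hF0 : F 0 = 0) (hF1 : F 1 = 1) (hF : ∀ n, F (n + 2) = p * F (n + 1) + q * F n)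
    (hL0 : L 0 = 2) (hL1 : L 1 = p) (hL : ∀ n, L (n + 2) = p * L (n + 1) + q * L n) (n : ℕ) :
    2 * β ^ n = L n - (p - 2 * β) * F n := by
  induction n using Nat.twoStepInduction with
  | zero => simp [hL0, hF0]
  | one => simp [hL1, hF1]
  | more n ih₀ ih₁ =>
    push_cast at *
    rw [hL, hF]
    linear_combination 2 * β ^ n * hβ + p * ih₁ + q * ih₀

def seqQuaternion (i j k : ℍ[R]) (G : ℤ → R) (n : ℤ) : ℍ[R] :=
  G n + G (n + 1) * i + G (n + 2) * j + G (n + 3) * k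

theorem seqQuaternion_lucas_sub_mul_fib {β : R} (hβ : β ^ 2 = p * β + q)
    (hF0 : F 0 = 0) (hF1 : F 1 = 1) (hF : ∀ n, F (n + 2) = p * F (n + 1) + q * F n)
    (hL0 : L 0 = 2) (hL1 : L 1 = p) (hL : ∀ n, L (n + 2) = p * L (n + 1) + q * L n)
    (i j k : ℍ[R]) (n : ℕ) :
    seqQuaternion i j k L n - ((p - 2 * β : R) : ℍ[R]) * seqQuaternion i j k F n
      = 2 * (β ^ n : R) * (1 + β * i + (β ^ 2 : R) * j + (β ^ 3 : R) * k) := by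
  have binet (m : ℕ) : L (n + m) - (p - 2 * β) * F (n + m) = 2 * β ^ n * β ^ m := by
    rw [mul_assoc, ← pow_add, two_mul_pow_eq_lucas_sub_mul_fib hβ hF0 hF1 hF hL0 hL1 hL]
    push_cast
    rfl
  have b0 := binet 0
  have b1 := binet 1
  have b2 := binet 2
  have b3 := binet 3
  simp only [Nat.cast_zero, Nat.cast_one, Nat.cast_ofNat, add_zero, pow_zero, pow_one, mul_one]
    at b0 b1 b2 b3
  calc seqQuaternion i j k L n - ((p - 2 * β : R) : ℍ[R]) * seqQuaternion i j k F n
      = ((L n - (p - 2 * β) * F n : R) : ℍ[R])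
        + ((L (n + 1) - (p - 2 * β) * F (n + 1) : R) : ℍ[R]) * i
        + ((L (n + 2) - (p - 2 * β) * F (n + 2) : R) : ℍ[R]) * j
        + ((L (n + 3) - (p - 2 * β) * F (n + 3) : R) : ℍ[R]) * k := by
        simp only [seqQuaternion]
        push_cast
        noncomm_ring
    _ = _ := by
        have h2 : ((2 : R) : ℍ[R]) = 2 := QuaternionAlgebra.coe_ofNat
        rw [b0, b1, b2, b3]
        simp only [coe_mul, h2, mul_add, mul_one, mul_assoc]

end Recurrence

theorem stmt_9 (p q : ℝ) (hpq : 0 < p^2 + 4*q)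
    (α β : ℝ)
    (hα : α = (p + Real.sqrt (p^2 + 4*q)) / 2)
    (hβ : β = (p - Real.sqrt (p^2 + 4*q)) / 2)
    (Δ : ℝ) (hΔ : Δ = α - β)
    (F : ℤ → ℝ) (hF0 : F 0 = 0) (hF1 : F 1 = 1)
    (hF : ∀ n : ℤ, F (n+2) = p * F (n+1) + q * F n)
    (L : ℤ → ℝ) (hL0 : L 0 = 2) (hL1 : L 1 = p)
    (hL : ∀ n : ℤ, L (n+2) = p * L (n+1) + q * L n)
    (i j k : ℍ[ℝ])
    (hi : i = ⟨0,1,0,0⟩) (hj : j = ⟨0,0,1,0⟩) (hk : k = ⟨0,0,0,1⟩)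
    (QF : ℤ → ℍ[ℝ])
    (hQF : ∀ n : ℤ, QF n = ((F n : ℝ) : ℍ[ℝ]) + ((F (n+1) : ℝ) : ℍ[ℝ]) * i
      + ((F (n+2) : ℝ) : ℍ[ℝ]) * j + ((F (n+3) : ℝ) : ℍ[ℝ]) * k)
    (QL : ℤ → ℍ[ℝ])
    (hQL : ∀ n : ℤ, QL n = ((L n : ℝ) : ℍ[ℝ]) + ((L (n+1) : ℝ) : ℍ[ℝ]) * i
      + ((L (n+2) : ℝ) : ℍ[ℝ]) * j + ((L (n+3) : ℝ) : ℍ[ℝ]) * k)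
    (uβ : ℍ[ℝ])
    (huβ : uβ = 1 + ((β : ℝ) : ℍ[ℝ]) * i + ((β^2 : ℝ) : ℍ[ℝ]) * j + ((β^3 : ℝ) : ℍ[ℝ]) * k)
    (rpq spq : ℝ)
    (hrpq : rpq = 1 + (p/2) * (F 2 + F 4 + F 6) + q * (F 1 + F 3 + F 5))
    (hspq : spq = (1/2) * (F 2 + F 4 + F 6)) :
    uβ ^ 2 = (QL 0 - ((rpq : ℝ) : ℍ[ℝ])) - ((Δ : ℝ) : ℍ[ℝ]) * (QF 0 - ((spq : ℝ) : ℍ[ℝ])) := by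
  have hβ2 := sq_eq_mul_add_of_eq_sub_sqrt hpq.le hβ
  have hΔβ : Δ = p - 2 * β := by rw [hΔ, hα, hβ]; ring
  have binet (n : ℕ) : 2 * β ^ n = L n - Δ * F n := by
    rw [hΔβ]
    exact two_mul_pow_eq_lucas_sub_mul_fib hβ2 hF0 hF1 hF hL0 hL1 hL n
  have lucas := lucas_succ_eq_fib hF0 hF1 hF hL0 hL1 hL
  have hQ : QL 0 - Δ * QF 0 = 2 * uβ := by
    have h := seqQuaternion_lucas_sub_mul_fib hβ2 hF0 hF1 hF hL0 hL1 hL i j k 0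
    have hQL' : QL = seqQuaternion i j k L := funext hQL
    have hQF' : QF = seqQuaternion i j k F := funext hQF
    rwa [← hΔβ, Nat.cast_zero, ← hQL', ← hQF', ← huβ, pow_zero, coe_one, mul_one] at h
  have hu : uβ = ⟨1, β, β ^ 2, β ^ 3⟩ := by
    rw [huβ, hi, hj, hk, ← coe_one]
    exact (mk_eq_coe_add_mul_basis _ _ _ _).symm
  have hN : normSq uβ = rpq - Δ * spq := by
    rw [normSq_def', hu, hrpq, hspq]
    -- the instances of `binet` and `lucas` mention `L ↑2`, `L (↑1 + 1)`, ...; `push_cast` reads them as `L 2`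
    linear_combination (norm := (push_cast [Int.reduceAdd]; ring1))
      (binet 2 + binet 4 + binet 6 + lucas 1 + lucas 3 + lucas 5) / 2
  have hre : uβ.re = 1 := by rw [hu]
  rw [sq_eq_two_re_mul_sub_normSq, hre, coe_one, mul_one, ← hQ, hN, coe_sub, coe_mul, mul_sub]
  abel
end

section
/- For all integers n and m (with q ≠ 0), the commutator of a (p,q)-Fibonacci quaternion and a generalized Fibonacci quaternion satisfies Q_F(n)·Q_w(m) − Q_w(m)·Q_F(n) = 2·(−q)^(n+1)·ω·W(m−n). -/
open Quaternion

/-!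
The Casoratian `u (n+1) * v n - u n * v (n+1)` of two solutions of `x (n+2) = p x (n+1) + q x n`
is multiplied by `-q` at each step, hence equals `(-q)^n` times its value at `0`. Applied to `F`
and a shift of `W` it gives `F (n+1) W m - F n W (m+1) = (-q)^n W (m-n)`. The commutator of two
quaternions is twice the cross product of their vector parts, and the three components of that
cross product for `Q_F(n)` and `Q_w(m)` are instances of this identity (the `j`-component after one
use of the recurrence).
-/

section Recurrence

variable {K : Type*} [Field K]

theorem eq_zpow_mul_of_forall_add_one_eq_mul {c : K} (hc : c ≠ 0) {f : ℤ → K}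
    (hf : ∀ n, f (n + 1) = c * f n) (n : ℤ) : f n = c ^ n * f 0 := by
  induction n using Int.induction_on with
  | zero => simp
  | succ n ih => rw [hf, ih, zpow_add_one₀ hc]; ring
  | pred n ih =>
    have h := hf (-n - 1)
    rw [sub_add_cancel, ih] at h
    rw [zpow_sub_one₀ hc, ← mul_right_inj' hc, ← h]
    field_simp

def IsHoradam (p q : K) (u : ℤ → K) : Prop :=
  ∀ n, u (n + 2) = p * u (n + 1) + q * u n

variable {p q : K} {u v : ℤ → K}

theorem IsHoradam.add_three (hu : IsHoradam p q u) (n : ℤ) :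
    u (n + 3) = p * u (n + 2) + q * u (n + 1) := by
  simpa only [add_assoc, show (1 : ℤ) + 2 = 3 by norm_num, show (1 : ℤ) + 1 = 2 by norm_num]
    using hu (n + 1)

theorem IsHoradam.comp_add (hv : IsHoradam p q v) (s : ℤ) :
    IsHoradam p q (fun n => v (n + s)) := by
  intro n
  simpa only [add_right_comm _ s] using hv (n + s)

theorem IsHoradam.casoratian_add_one (hu : IsHoradam p q u) (hv : IsHoradam p q v) (n : ℤ) :
    u (n + 1 + 1) * v (n + 1) - u (n + 1) * v (n + 1 + 1) =
      -q * (u (n + 1) * v n - u n * v (n + 1)) := by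
  rw [add_assoc, one_add_one_eq_two, hu, hv]
  ring

theorem IsHoradam.casoratian_eq_zpow (hq : q ≠ 0) (hu : IsHoradam p q u)
    (hv : IsHoradam p q v) (n : ℤ) :
    u (n + 1) * v n - u n * v (n + 1) = (-q) ^ n * (u 1 * v 0 - u 0 * v 1) := by
  simpa using eq_zpow_mul_of_forall_add_one_eq_mul (neg_ne_zero.mpr hq)
    (f := fun n => u (n + 1) * v n - u n * v (n + 1)) (hu.casoratian_add_one hv) n

theorem IsHoradam.mul_sub_mul_eq_zpow_mul (hq : q ≠ 0) {F W : ℤ → K}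
    (hF0 : F 0 = 0) (hF1 : F 1 = 1) (hF : IsHoradam p q F) (hW : IsHoradam p q W) (n m : ℤ) :
    F (n + 1) * W m - F n * W (m + 1) = (-q) ^ n * W (m - n) := by
  have h := hF.casoratian_eq_zpow hq (hW.comp_add (m - n)) n
  simpa only [hF0, hF1, add_sub_cancel, add_right_comm n 1, one_mul, zero_mul, sub_zero,
    zero_add] using h

end Recurrence

theorem stmt_11_general (p q : ℝ)
    (hq : q ≠ 0)
    (F : ℤ → ℝ) (hF0 : F 0 = 0) (hF1 : F 1 = 1)
    (hF : ∀ n : ℤ, F (n+2) = p * F (n+1) + q * F n)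
    (W : ℤ → ℝ)
    (hW : ∀ n : ℤ, W (n+2) = p * W (n+1) + q * W n)
    (i j k : ℍ[ℝ])
    (hi : i = ⟨0,1,0,0⟩) (hj : j = ⟨0,0,1,0⟩) (hk : k = ⟨0,0,0,1⟩)
    (QF : ℤ → ℍ[ℝ])
    (hQF : ∀ n : ℤ, QF n = ((F n : ℝ) : ℍ[ℝ]) + ((F (n+1) : ℝ) : ℍ[ℝ]) * i
      + ((F (n+2) : ℝ) : ℍ[ℝ]) * j + ((F (n+3) : ℝ) : ℍ[ℝ]) * k)
    (Qw : ℤ → ℍ[ℝ])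
    (hQw : ∀ n : ℤ, Qw n = ((W n : ℝ) : ℍ[ℝ]) + ((W (n+1) : ℝ) : ℍ[ℝ]) * i
      + ((W (n+2) : ℝ) : ℍ[ℝ]) * j + ((W (n+3) : ℝ) : ℍ[ℝ]) * k)
    (ω : ℍ[ℝ]) (hω : ω = ((q : ℝ) : ℍ[ℝ]) * i + ((p : ℝ) : ℍ[ℝ]) * j - k)
    (n m : ℤ) :
    QF n * Qw m - Qw m * QF n = ((2 * (-q)^(n+1) : ℝ) : ℍ[ℝ]) * ω * ((W (m-n) : ℝ) : ℍ[ℝ]) := by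
  have key := IsHoradam.mul_sub_mul_eq_zpow_mul hq hF0 hF1 hF hW
  have h1 := key (n + 1) (m + 1)
  have h2 := key (n + 1 + 1) (m + 1 + 1)
  rw [zpow_add_one₀ (neg_ne_zero.mpr hq)] at h2
  simp only [add_sub_add_right_eq_sub, add_assoc, one_add_one_eq_two, two_add_one_eq_three]
    at h1 h2
  -- Substituting the literals `⟨0,1,0,0⟩` would leave terms whose type is `ℍ[ℝ]` only up to
  -- unfolding, which the `Quaternion` simp lemmas do not match; use their components instead.
  have hi' := QuaternionAlgebra.ext_iff.mp hi
  have hj' := QuaternionAlgebra.ext_iff.mp hj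
  have hk' := QuaternionAlgebra.ext_iff.mp hk
  subst hω
  rw [hQF, hQw]
  ext <;>
    simp only [Quaternion.re_mul, Quaternion.imI_mul, Quaternion.imJ_mul, Quaternion.imK_mul,
      Quaternion.re_add, Quaternion.imI_add, Quaternion.imJ_add, Quaternion.imK_add,
      Quaternion.re_sub, Quaternion.imI_sub, Quaternion.imJ_sub, Quaternion.imK_sub,
      Quaternion.re_coe, Quaternion.imI_coe, Quaternion.imJ_coe, Quaternion.imK_coe, hi', hj', hk']
  · ring
  · linear_combination (-2 : ℝ) * h2
  · linear_combination 2 * W (m + 1) * IsHoradam.add_three hF n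
      - 2 * F (n + 1) * IsHoradam.add_three hW m + 2 * p * h1
  · linear_combination (-2 : ℝ) * h1

theorem stmt_11 (p q : ℝ) (hpq : 0 < p^2 + 4*q)
    (hq : q ≠ 0)
    (α β : ℝ)
    (hα : α = (p + Real.sqrt (p^2 + 4*q)) / 2)
    (hβ : β = (p - Real.sqrt (p^2 + 4*q)) / 2)
    (F : ℤ → ℝ) (hF0 : F 0 = 0) (hF1 : F 1 = 1)
    (hF : ∀ n : ℤ, F (n+2) = p * F (n+1) + q * F n)
    (a b : ℝ) (W : ℤ → ℝ) (hW0 : W 0 = a) (hW1 : W 1 = b)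
    (hW : ∀ n : ℤ, W (n+2) = p * W (n+1) + q * W n)
    (i j k : ℍ[ℝ])
    (hi : i = ⟨0,1,0,0⟩) (hj : j = ⟨0,0,1,0⟩) (hk : k = ⟨0,0,0,1⟩)
    (QF : ℤ → ℍ[ℝ])
    (hQF : ∀ n : ℤ, QF n = ((F n : ℝ) : ℍ[ℝ]) + ((F (n+1) : ℝ) : ℍ[ℝ]) * i
      + ((F (n+2) : ℝ) : ℍ[ℝ]) * j + ((F (n+3) : ℝ) : ℍ[ℝ]) * k)
    (Qw : ℤ → ℍ[ℝ])
    (hQw : ∀ n : ℤ, Qw n = ((W n : ℝ) : ℍ[ℝ]) + ((W (n+1) : ℝ) : ℍ[ℝ]) * i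
      + ((W (n+2) : ℝ) : ℍ[ℝ]) * j + ((W (n+3) : ℝ) : ℍ[ℝ]) * k)
    (ω : ℍ[ℝ]) (hω : ω = ((q : ℝ) : ℍ[ℝ]) * i + ((p : ℝ) : ℍ[ℝ]) * j - k)
    (n m : ℤ) :
    QF n * Qw m - Qw m * QF n = ((2 * (-q)^(n+1) : ℝ) : ℍ[ℝ]) * ω * ((W (m-n) : ℝ) : ℍ[ℝ]) :=
  stmt_11_general p q hq F hF0 hF1 hF W hW i j k hi hj hk QF hQF Qw hQw ω hω n m
end

section
/- For every integer n (with q ≠ 0): Q_F(n)·Q_w(n) − Q_w(n)·Q_F(n) = 2·(−q)^(n+1)·a·ω. -/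
/-! The commutator of two quaternions is twice the cross product of their vector parts. For
`Q_F(n)` and `Q_w(n)`, the recurrence reduces each component of that cross product to a multiple
of the Casoratian `C(m) = F(m+1) W(m) - F(m) W(m+1)` at `m = n + 1`. The Casoratian of two
solutions of the same recurrence gets multiplied by `-q` at each step, so
`C(m) = (-q)^m C(0) = (-q)^m a`. -/

open Quaternion

namespace Quaternion

variable {R : Type*} [CommRing R]

theorem coe_add_coe_mul_add_coe_mul_add_coe_mul {i j k : ℍ[R]} (hi : i = ⟨0, 1, 0, 0⟩)
    (hj : j = ⟨0, 0, 1, 0⟩) (hk : k = ⟨0, 0, 0, 1⟩) (r₀ r₁ r₂ r₃ : R) :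
    (r₀ : ℍ[R]) + r₁ * i + r₂ * j + r₃ * k = ⟨r₀, r₁, r₂, r₃⟩ := by
  ext <;> simp [coe_mul_eq_smul] <;> simp [hi, hj, hk]

theorem mul_sub_mul_swap (x y : ℍ[R]) :
    x * y - y * x = (⟨0, 2 * (x.imJ * y.imK - x.imK * y.imJ), 2 * (x.imK * y.imI - x.imI * y.imK),
      2 * (x.imI * y.imJ - x.imJ * y.imI)⟩ : ℍ[R]) := by
  ext <;> simp <;> ring

end Quaternion

theorem eq_zpow_mul_of_forall_add_one_s12 {K : Type*} [Field K] {c : K} (hc : c ≠ 0)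
    {u : ℤ → K} (hu : ∀ m, u (m + 1) = c * u m) (m : ℤ) : u m = c ^ m * u 0 := by
  induction m using Int.induction_on with
  | zero => simp
  | succ m ih => rw [hu, ih, zpow_add_one₀ hc]; ring
  | pred m ih =>
    have h := hu (-m - 1)
    rw [sub_add_cancel, ih] at h
    rw [zpow_sub_one₀ hc]
    field_simp
    linear_combination -h

section Casoratian

variable {R : Type*} [CommRing R]

def casoratian (F W : ℤ → R) (m : ℤ) : R := F (m + 1) * W m - F m * W (m + 1)

theorem casoratian_add_one {p q : R} {F W : ℤ → R}
    (hF : ∀ n, F (n + 2) = p * F (n + 1) + q * F n)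
    (hW : ∀ n, W (n + 2) = p * W (n + 1) + q * W n) (m : ℤ) :
    casoratian F W (m + 1) = -q * casoratian F W m := by
  simp only [casoratian, add_assoc, one_add_one_eq_two, hF, hW]
  ring

end Casoratian

theorem stmt_12_general (p q : ℝ)
    (hq : q ≠ 0)
    (F : ℤ → ℝ) (hF0 : F 0 = 0) (hF1 : F 1 = 1)
    (hF : ∀ n : ℤ, F (n+2) = p * F (n+1) + q * F n)
    (a : ℝ) (W : ℤ → ℝ) (hW0 : W 0 = a)
    (hW : ∀ n : ℤ, W (n+2) = p * W (n+1) + q * W n)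
    (i j k : ℍ[ℝ])
    (hi : i = ⟨0,1,0,0⟩) (hj : j = ⟨0,0,1,0⟩) (hk : k = ⟨0,0,0,1⟩)
    (QF : ℤ → ℍ[ℝ])
    (hQF : ∀ n : ℤ, QF n = ((F n : ℝ) : ℍ[ℝ]) + ((F (n+1) : ℝ) : ℍ[ℝ]) * i
      + ((F (n+2) : ℝ) : ℍ[ℝ]) * j + ((F (n+3) : ℝ) : ℍ[ℝ]) * k)
    (Qw : ℤ → ℍ[ℝ])
    (hQw : ∀ n : ℤ, Qw n = ((W n : ℝ) : ℍ[ℝ]) + ((W (n+1) : ℝ) : ℍ[ℝ]) * i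
      + ((W (n+2) : ℝ) : ℍ[ℝ]) * j + ((W (n+3) : ℝ) : ℍ[ℝ]) * k)
    (ω : ℍ[ℝ]) (hω : ω = ((q : ℝ) : ℍ[ℝ]) * i + ((p : ℝ) : ℍ[ℝ]) * j - k)
    (n : ℤ) :
    QF n * Qw n - Qw n * QF n = ((2 * (-q)^(n+1) * a : ℝ) : ℍ[ℝ]) * ω := by
  have hC : F (n + 2) * W (n + 1) - F (n + 1) * W (n + 2) = (-q) ^ (n + 1) * a := by
    have h := eq_zpow_mul_of_forall_add_one_s12 (neg_ne_zero.mpr hq) (casoratian_add_one hF hW) (n + 1)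
    simpa [casoratian, add_assoc, one_add_one_eq_two, hF0, hF1, hW0] using h
  have hF3 : F (n + 3) = p * F (n + 2) + q * F (n + 1) := by
    simpa only [add_assoc, Int.reduceAdd] using hF (n + 1)
  have hW3 : W (n + 3) = p * W (n + 2) + q * W (n + 1) := by
    simpa only [add_assoc, Int.reduceAdd] using hW (n + 1)
  have hω' : ω = ⟨0, q, p, -1⟩ := by
    rw [hω, ← coe_add_coe_mul_add_coe_mul_add_coe_mul hi hj hk]
    simp [sub_eq_add_neg]
  rw [mul_sub_mul_swap, coe_mul_eq_smul, hQF, hQw, coe_add_coe_mul_add_coe_mul_add_coe_mul hi hj hk,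
    coe_add_coe_mul_add_coe_mul_add_coe_mul hi hj hk]
  ext <;> simp only [re_smul, imI_smul, imJ_smul, imK_smul, smul_eq_mul, hF3, hW3] <;>
    simp only [hω']
  · ring
  · linear_combination 2 * q * hC
  · linear_combination 2 * p * hC
  · linear_combination -2 * hC

theorem stmt_12 (p q : ℝ) (hpq : 0 < p^2 + 4*q)
    (hq : q ≠ 0)
    (F : ℤ → ℝ) (hF0 : F 0 = 0) (hF1 : F 1 = 1)
    (hF : ∀ n : ℤ, F (n+2) = p * F (n+1) + q * F n)
    (a b : ℝ) (W : ℤ → ℝ) (hW0 : W 0 = a) (hW1 : W 1 = b)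
    (hW : ∀ n : ℤ, W (n+2) = p * W (n+1) + q * W n)
    (i j k : ℍ[ℝ])
    (hi : i = ⟨0,1,0,0⟩) (hj : j = ⟨0,0,1,0⟩) (hk : k = ⟨0,0,0,1⟩)
    (QF : ℤ → ℍ[ℝ])
    (hQF : ∀ n : ℤ, QF n = ((F n : ℝ) : ℍ[ℝ]) + ((F (n+1) : ℝ) : ℍ[ℝ]) * i
      + ((F (n+2) : ℝ) : ℍ[ℝ]) * j + ((F (n+3) : ℝ) : ℍ[ℝ]) * k)
    (Qw : ℤ → ℍ[ℝ])
    (hQw : ∀ n : ℤ, Qw n = ((W n : ℝ) : ℍ[ℝ]) + ((W (n+1) : ℝ) : ℍ[ℝ]) * i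
      + ((W (n+2) : ℝ) : ℍ[ℝ]) * j + ((W (n+3) : ℝ) : ℍ[ℝ]) * k)
    (ω : ℍ[ℝ]) (hω : ω = ((q : ℝ) : ℍ[ℝ]) * i + ((p : ℝ) : ℍ[ℝ]) * j - k)
    (n : ℤ) :
    QF n * Qw n - Qw n * QF n = ((2 * (-q)^(n+1) * a : ℝ) : ℍ[ℝ]) * ω :=
  stmt_12_general p q hq F hF0 hF1 hF a W hW0 hW i j k hi hj hk QF hQF Qw hQw ω hω n
end

section
/- (Binet formula for generalized Fibonacci quaternions) For every integer n (with q ≠ 0): Q_w(n) = (A·α̲·α^n − B·β̲·β^n)/(α − β), where A = b − aβ and B = b − aα. -/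
/-!
Both `W` and `m ↦ (A αᵐ - B βᵐ) / (α - β)` satisfy the recurrence (because `α` and `β` are roots of
`t² = p t + q`) and agree at `0` and `1`; as `q ≠ 0` the recurrence can also be run backwards, so
they agree on all of `ℤ`. The quaternion identity is this Binet formula in each of the four
coordinates, since `α̲ αⁿ` has coordinates `αⁿ, αⁿ⁺¹, αⁿ⁺², αⁿ⁺³`.
-/

open Quaternion

theorem eq_of_linear_recurrence {R : Type*} [Ring R] [NoZeroDivisors R] {p q : R} (hq : q ≠ 0)
    {U V : ℤ → R} (hU : ∀ n, U (n + 2) = p * U (n + 1) + q * U n)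
    (hV : ∀ n, V (n + 2) = p * V (n + 1) + q * V n) (h0 : U 0 = V 0) (h1 : U 1 = V 1) :
    U = V := by
  suffices h : ∀ n : ℤ, U n = V n ∧ U (n + 1) = V (n + 1) from funext fun n => (h n).1
  intro n
  induction n using Int.induction_on with
  | zero => exact ⟨h0, by simpa using h1⟩
  | succ n ih =>
    refine ⟨ih.2, ?_⟩
    rw [add_assoc, one_add_one_eq_two, hU, hV, ih.1, ih.2]
  | pred n ih =>
    have hUn := hU (-n - 1)
    have hVn := hV (-n - 1)
    rw [show -(n : ℤ) - 1 + 2 = -n + 1 by ring, sub_add_cancel] at hUn hVn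
    rw [sub_add_cancel]
    refine ⟨mul_left_cancel₀ hq (add_left_cancel (a := p * U (-n)) ?_), ih.1⟩
    rw [← hUn, ih.1, ih.2, hVn]

section Binet

variable {K : Type*} [Field K] {p q : K}

theorem zpow_add_two_of_sq_eq {x : K} (hx : x ^ 2 = p * x + q) (hx0 : x ≠ 0) (n : ℤ) :
    x ^ (n + 2) = p * x ^ (n + 1) + q * x ^ n := by
  rw [zpow_add₀ hx0, zpow_add_one₀ hx0, zpow_ofNat, hx]
  ring

theorem ne_zero_of_sq_eq {x : K} (hx : x ^ 2 = p * x + q) (hq : q ≠ 0) : x ≠ 0 := by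
  rintro rfl
  exact hq (by simpa using hx.symm)

theorem binet_of_linear_recurrence {α β : K} (hα : α ^ 2 = p * α + q) (hβ : β ^ 2 = p * β + q)
    (hαβ : α - β ≠ 0) (hq : q ≠ 0) {W : ℤ → K}
    (hW : ∀ n, W (n + 2) = p * W (n + 1) + q * W n) (n : ℤ) :
    W n = ((W 1 - W 0 * β) * α ^ n - (W 1 - W 0 * α) * β ^ n) / (α - β) := by
  refine congrFun (eq_of_linear_recurrence hq hW
    (V := fun m => ((W 1 - W 0 * β) * α ^ m - (W 1 - W 0 * α) * β ^ m) / (α - β))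
    (fun m => ?_) ?_ ?_) n
  · rw [zpow_add_two_of_sq_eq hα (ne_zero_of_sq_eq hα hq),
      zpow_add_two_of_sq_eq hβ (ne_zero_of_sq_eq hβ hq)]
    ring
  · field_simp
    ring
  · field_simp
    ring

end Binet

theorem Quaternion.coe_add_coe_mul_ijk_eq_mk {R : Type*} [CommRing R]
    {i j k : ℍ[R]} (hi : i = ⟨0, 1, 0, 0⟩) (hj : j = ⟨0, 0, 1, 0⟩) (hk : k = ⟨0, 0, 0, 1⟩)
    (x y z w : R) :
    (x : ℍ[R]) + (y : ℍ[R]) * i + (z : ℍ[R]) * j + (w : ℍ[R]) * k = ⟨x, y, z, w⟩ := by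
  simp only [coe_mul_eq_smul]
  ext <;> simp <;> simp [hi, hj, hk]

theorem stmt_13 (p q : ℝ) (hpq : 0 < p^2 + 4*q)
    (hq : q ≠ 0)
    (α β : ℝ)
    (hα : α = (p + Real.sqrt (p^2 + 4*q)) / 2)
    (hβ : β = (p - Real.sqrt (p^2 + 4*q)) / 2)
    (a b : ℝ) (W : ℤ → ℝ) (hW0 : W 0 = a) (hW1 : W 1 = b)
    (hW : ∀ n : ℤ, W (n+2) = p * W (n+1) + q * W n)
    (A B : ℝ) (hA : A = b - a * β) (hB : B = b - a * α)
    (i j k : ℍ[ℝ])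
    (hi : i = ⟨0,1,0,0⟩) (hj : j = ⟨0,0,1,0⟩) (hk : k = ⟨0,0,0,1⟩)
    (Qw : ℤ → ℍ[ℝ])
    (hQw : ∀ n : ℤ, Qw n = ((W n : ℝ) : ℍ[ℝ]) + ((W (n+1) : ℝ) : ℍ[ℝ]) * i
      + ((W (n+2) : ℝ) : ℍ[ℝ]) * j + ((W (n+3) : ℝ) : ℍ[ℝ]) * k)
    (uα : ℍ[ℝ])
    (huα : uα = 1 + ((α : ℝ) : ℍ[ℝ]) * i + ((α^2 : ℝ) : ℍ[ℝ]) * j + ((α^3 : ℝ) : ℍ[ℝ]) * k)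
    (uβ : ℍ[ℝ])
    (huβ : uβ = 1 + ((β : ℝ) : ℍ[ℝ]) * i + ((β^2 : ℝ) : ℍ[ℝ]) * j + ((β^3 : ℝ) : ℍ[ℝ]) * k)
    (n : ℤ) :
    Qw n = (((A : ℝ) : ℍ[ℝ]) * uα * ((α^n : ℝ) : ℍ[ℝ])
      - ((B : ℝ) : ℍ[ℝ]) * uβ * ((β^n : ℝ) : ℍ[ℝ])) / (((α - β : ℝ)) : ℍ[ℝ]) := by
  have hdisc := Real.sq_sqrt hpq.le
  have hαroot : α ^ 2 = p * α + q := by rw [hα]; linear_combination hdisc / 4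
  have hβroot : β ^ 2 = p * β + q := by rw [hβ]; linear_combination hdisc / 4
  have hαβ : α - β ≠ 0 := by
    rw [show α - β = Real.sqrt (p ^ 2 + 4 * q) by rw [hα, hβ]; ring]
    exact (Real.sqrt_pos.mpr hpq).ne'
  have hα0 := ne_zero_of_sq_eq hαroot hq
  have hβ0 := ne_zero_of_sq_eq hβroot hq
  have hbinet (m : ℤ) : W m = (A * α ^ m - B * β ^ m) / (α - β) := by
    rw [binet_of_linear_recurrence hαroot hβroot hαβ hq hW, hW0, hW1, hA, hB]
  have hmk := coe_add_coe_mul_ijk_eq_mk hi hj hk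
  have hQ : Qw n = ⟨W n, W (n + 1), W (n + 2), W (n + 3)⟩ := by rw [hQw, hmk]
  have huα' : uα = ⟨1, α, α ^ 2, α ^ 3⟩ := by rw [huα, ← coe_one, hmk]
  have huβ' : uβ = ⟨1, β, β ^ 2, β ^ 3⟩ := by rw [huβ, ← coe_one, hmk]
  rw [div_eq_mul_inv, ← coe_inv]
  simp only [coe_mul_eq_smul, mul_coe_eq_smul]
  -- the scalars must be pushed out before `uα`, `uβ` become literals, on which the `smul`
  -- simp lemmas do not fire
  ext <;> simp <;> simp [hQ, huα', huβ', hbinet, zpow_add₀ hα0, zpow_add₀ hβ0] <;> field_simp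
end
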